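/- arXiv:1301.5263 — 11 statements merged into one kernel-verified Lean document; each statement's English description precedes it below -/
import Mathlib

section
/- Every non-empty factor w of a Sturmian word s is rich in exactly one of the two letters a, b; that is, there exists exactly one letter z ∈ {a,b} such that some factor v of s with |v| = |w| satisfies |w|_z > |v|_z. -/
/-- Letters: `false` plays the role of `a`, `true` the role of `b`.
A finite word `u` is a factor of the infinite word `s`. -/
def FactorOf (s : ℕ → Bool) (u : List Bool) : Prop :=
  ∃ i : ℕ, u = (List.range u.length).map fun k => s (i + k)

/-- `u` is a (finite) prefix of the infinite word `s`. -/
def PrefixOf (s : ℕ → Bool) (u : List Bool) : Prop :=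
  u = (List.range u.length).map s

def EventuallyPeriodic (s : ℕ → Bool) : Prop :=
  ∃ p > 0, ∃ N, ∀ n ≥ N, s (n + p) = s n

/-- `s` is balanced: counts of each letter in equal-length factors differ by at most 1. -/
def BalancedW (s : ℕ → Bool) : Prop :=
  ∀ u v, FactorOf s u → FactorOf s v → u.length = v.length →
    ∀ x : Bool, |(u.count x : ℤ) - (v.count x : ℤ)| ≤ 1

/-- A Sturmian word: aperiodic and balanced. -/
def Sturmian (s : ℕ → Bool) : Prop :=
  ¬ EventuallyPeriodic s ∧ BalancedW s

/-- `u` is rich in the letter `x` (with respect to `s`). -/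
def RichIn (s : ℕ → Bool) (u : List Bool) (x : Bool) : Prop :=
  ∃ v, FactorOf s v ∧ v.length = u.length ∧ v.count x < u.count x

/-- `s = U 0 ++ U 1 ++ ⋯` with all the `U i` non-empty. -/
def Factorization (s : ℕ → Bool) (U : ℕ → List Bool) : Prop :=
  (∀ i, U i ≠ []) ∧ ∀ n, PrefixOf s (((List.range n).map U).flatten)

/-- The morphism `R : a ↦ a, b ↦ ba`. -/
def Rmor : Bool → List Bool := fun x => if x then [true, false] else [false]

/-- The morphism `L : a ↦ a, b ↦ ab`. -/
def Lmor : Bool → List Bool := fun x => if x then [false, true] else [false]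

/-- `s` is the image of the infinite word `t` under the substitution `m`. -/
def SubstEq (m : Bool → List Bool) (t s : ℕ → Bool) : Prop :=
  ∀ n, PrefixOf s (((List.range n).map fun i => m (t i)).flatten)

lemma count_tf (l : List Bool) : l.count true + l.count false = l.length := by
  induction l with
  | nil => simp
  | cons h t ih => cases h <;> simp [List.count_cons] <;> omega

lemma count_add_bool (l : List Bool) (z : Bool) : l.count z + l.count (!z) = l.length := by
  cases z
  · rw [Nat.add_comm]; simpa using count_tf l
  · simpa using count_tf l

/-- Every non-empty factor of a Sturmian word is rich in exactly one letter. -/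
theorem stmt_2 (s : ℕ → Bool) (hs : Sturmian s) (w : List Bool)
    (hw : FactorOf s w) (hne : w ≠ []) :
    ∃! z : Bool, RichIn s w z := by
  obtain ⟨hap, hbal⟩ := hs
  set n := w.length with hn
  have hnpos : 0 < n := List.length_pos_iff.mpr hne
  have hWfac : ∀ i, FactorOf s ((List.range n).map fun k => s (i + k)) := by
    intro i; exact ⟨i, by simp⟩
  have hWlen : ∀ i, ((List.range n).map fun k => s (i + k)).length = n := by simp
  have hex : ∃ z, RichIn s w z := by
    by_contra h
    push_neg at h
    have hcount : ∀ i z, ((List.range n).map fun k => s (i + k)).count z = w.count z := by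
      intro i z
      have h1 : ∀ z', w.count z' ≤ ((List.range n).map fun k => s (i + k)).count z' := by
        intro z'
        by_contra hlt
        exact h z' ⟨_, hWfac i, by rw [hWlen], by omega⟩
      have e1 := count_add_bool ((List.range n).map fun k => s (i + k)) true
      have e2 := count_add_bool w true
      rw [hWlen] at e1
      rw [← hn] at e2
      have ha := h1 true
      have hb := h1 false
      simp only [Bool.not_true] at e1 e2
      cases z <;> omega
    have hper : ∀ i, s (i + n) = s i := by
      intro i
      have h1 : (List.range (n+1)).map (fun k => s (i + k)) =
          ((List.range n).map fun k => s (i + k)) ++ [s (i + n)] := by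
        rw [List.range_succ]; simp
      have h2 : (List.range (n+1)).map (fun k => s (i + k)) =
          s i :: ((List.range n).map fun k => s (i + 1 + k)) := by
        rw [List.range_succ_eq_map]
        simp only [List.map_cons, List.map_map, Function.comp_def, Nat.add_zero]
        congr 1
        exact List.map_congr_left fun k _ => by congr 1; omega
      have key : (s i :: ((List.range n).map fun k => s (i + 1 + k))).count true =
          (((List.range n).map fun k => s (i + k)) ++ [s (i + n)]).count true := by
        rw [← h1, ← h2]
      rw [List.count_cons, List.count_append, hcount (i+1) true, hcount i true] at key
      cases hsi : s i <;> cases hsn : s (i + n) <;> simp_all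
    exact hap ⟨n, hnpos, 0, fun m _ => hper m⟩
  obtain ⟨z, hz⟩ := hex
  refine ⟨z, hz, ?_⟩
  intro y hy
  by_contra hne'
  have hyz : y = !z := by cases y <;> cases z <;> simp_all
  subst hyz
  obtain ⟨v, hv, hvl, hvc⟩ := hz
  obtain ⟨v', hv', hvl', hvc'⟩ := hy
  have e1 := count_add_bool v' z
  have e2 := count_add_bool w z
  have hb := hbal v v' hv hv' (by omega) z
  rw [abs_le] at hb
  omega
end

section
/- If w is a non-empty right special factor of a Sturmian word s, then w is rich in its first letter; that is, if w = z w' with z a letter, then there is a factor v of s with |v| = |w| and |w|_z > |v|_z. -/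
lemma factor_tail (s : ℕ → Bool) (x : Bool) (u : List Bool)
    (h : FactorOf s (x :: u)) : FactorOf s u := by
  obtain ⟨i, h⟩ := h
  refine ⟨i + 1, ?_⟩
  rw [List.length_cons, List.range_succ_eq_map, List.map_cons, List.map_map] at h
  have := (List.cons.injEq _ _ _ _).mp h
  conv_lhs => rw [this.2]
  apply List.map_congr_left
  intro k _
  simp [Nat.succ_eq_add_one]
  ring_nf

/-- A non-empty right special factor of a Sturmian word is rich in its first letter. -/
theorem stmt_3 (s : ℕ → Bool) (hs : Sturmian s) (z : Bool) (w' : List Bool)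
    (hra : FactorOf s ((z :: w') ++ [false])) (hrb : FactorOf s ((z :: w') ++ [true])) :
    RichIn s (z :: w') z := by
  cases z with
  | false =>
    refine ⟨w' ++ [true], factor_tail s false _ hrb, by simp, ?_⟩
    simp [List.count_append]
  | true =>
    refine ⟨w' ++ [false], factor_tail s true _ hra, by simp, ?_⟩
    simp [List.count_append]
end

section
/- If w is a non-empty left special factor of a Sturmian word s, then w is rich in its last letter. -/
def Win (s : ℕ → Bool) (i n : ℕ) : List Bool := (List.range n).map fun k => s (i + k)

lemma Win_length (s : ℕ → Bool) (i n : ℕ) : (Win s i n).length = n := by simp [Win]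

lemma Win_factor (s : ℕ → Bool) (i n : ℕ) : FactorOf s (Win s i n) := ⟨i, by simp [Win]⟩

lemma Win_cons (s : ℕ → Bool) (i n : ℕ) : Win s i (n+1) = s i :: Win s (i+1) n := by
  apply List.ext_getElem (by simp [Win])
  intro k h1 h2
  rcases k with _ | k <;> simp [Win] <;> congr 1 <;> omega

lemma Win_snoc (s : ℕ → Bool) (i n : ℕ) : Win s i (n+1) = Win s i n ++ [s (i+n)] := by
  simp [Win, List.range_succ]

/-- A non-empty left special factor of a Sturmian word is rich in its last letter. -/
theorem stmt_4 (s : ℕ → Bool) (hs : Sturmian s) (z : Bool) (w' : List Bool)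
    (hla : FactorOf s (false :: (w' ++ [z]))) (hlb : FactorOf s (true :: (w' ++ [z]))) :
    RichIn s (w' ++ [z]) z := by
  by_contra hrich
  rw [RichIn] at hrich
  push_neg at hrich
  set m := w'.length + 1 with hm
  -- get an occurrence of (!z) :: (w' ++ [z])
  obtain ⟨i0, hi0⟩ : ∃ i, (!z) :: (w' ++ [z]) = Win s i (m+1) := by
    cases z
    · obtain ⟨i, hi⟩ := hlb
      exact ⟨i, by simpa [Win, hm] using hi⟩
    · obtain ⟨i, hi⟩ := hla
      exact ⟨i, by simpa [Win, hm] using hi⟩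
  -- prefix (!z) :: w' is a window of length m
  have hpre : (!z) :: w' = Win s i0 m := by
    have h1 : ((!z) :: w') ++ [z] = Win s i0 m ++ [s (i0 + m)] := by
      rw [← Win_snoc]; simpa using hi0
    exact List.append_inj_left' h1 (by simp)
  have hprefac : FactorOf s ((!z) :: w') := hpre ▸ Win_factor s i0 m
  have hprecnt : ((!z) :: w').count z = w'.count z := by
    cases z <;> simp
  -- every window of length m has z-count exactly w'.count z + 1
  have heq : ∀ i, (Win s i m).count z = w'.count z + 1 := by
    intro i
    have hub := hs.2 (Win s i m) ((!z) :: w') (Win_factor s i m) hprefac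
      (by simp [Win_length, hm]) z
    rw [abs_le] at hub
    have hlb' := hrich (Win s i m) (Win_factor s i m) (by simp [Win_length, hm])
    have hkw : (w' ++ [z]).count z = w'.count z + 1 := by simp
    rw [hkw] at hlb'
    rw [hprecnt] at hub
    omega
  -- s is eventually periodic with period m
  have hper : ∀ i, s (i + m) = s i := by
    intro i
    have key : List.count z (s i :: Win s (i+1) m) = List.count z (Win s i m ++ [s (i+m)]) := by
      rw [← Win_cons, ← Win_snoc]
    rw [List.count_cons, List.count_append, heq, heq] at key
    cases hsi : s i <;> cases hsm : s (i + m) <;> cases z <;>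
      simp_all <;> omega
  exact hs.1 ⟨m, by omega, 0, fun n _ => hper n⟩
end

section
/- Let s be a Sturmian word with letter frequency f_x(s) for the letter x (which exists and is irrational). If U is a non-empty factor of s that is rich in x, then |U|_x / |U| > f_x(s). -/
lemma block_factor' (s : ℕ → Bool) (i n : ℕ) :
    FactorOf s ((List.range n).map fun t => s (i + t)) :=
  ⟨i, by simp⟩

lemma count_mul_le' (s : ℕ → Bool) (hbal : BalancedW s) (x : Bool)
    (W : List Bool) (hW : FactorOf s W) (k : ℕ) :
    ((List.range (k * W.length)).map s).count x ≤ k * (W.count x + 1) := by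
  induction k with
  | zero => simp
  | succ k ih =>
      have hsplit : (k+1) * W.length = k * W.length + W.length := by ring
      rw [hsplit, List.range_add, List.map_append, List.count_append, List.map_map]
      have hb := hbal ((List.range W.length).map fun t => s (k * W.length + t)) W
        (block_factor' s _ _) hW (by simp) x
      have h1 : (((List.range W.length).map fun t => s (k * W.length + t)).count x : ℤ)
          ≤ W.count x + 1 := by
        have := abs_le.mp hb
        linarith [this.2]
      have hle : ((List.range W.length).map fun t => s (k * W.length + t)).count x
          ≤ W.count x + 1 := by exact_mod_cast h1
      have hcomp : (s ∘ fun j => k * W.length + j) = fun t => s (k * W.length + t) := rfl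
      rw [hcomp, Nat.succ_mul]
      omega

lemma freq_bound' (s : ℕ → Bool) (hbal : BalancedW s) (x : Bool) (f : ℝ)
    (hfreq : Filter.Tendsto
      (fun n : ℕ => ((((List.range n).map s).count x : ℝ)) / n) Filter.atTop (nhds f))
    (W : List Bool) (hW : FactorOf s W) (hne : W ≠ []) :
    (W.length : ℝ) * f ≤ W.count x + 1 := by
  set n := W.length with hn
  have hn0 : 0 < n := List.length_pos_iff.mpr hne
  have hmul : Filter.Tendsto (fun k : ℕ => k * n) Filter.atTop Filter.atTop := by
    apply Filter.tendsto_atTop_mono (fun k => Nat.le_mul_of_pos_right k hn0)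
    exact Filter.tendsto_id
  have htend : Filter.Tendsto
      (fun k : ℕ => ((((List.range (k * n)).map s).count x : ℝ)) / (k * n : ℕ))
      Filter.atTop (nhds f) := hfreq.comp hmul
  have hle : f ≤ (W.count x + 1 : ℝ) / n := by
    refine le_of_tendsto htend ?_
    filter_upwards [Filter.eventually_ge_atTop 1] with k hk
    have hkn : (0:ℝ) < (k * n : ℕ) := by positivity
    rw [div_le_div_iff₀ hkn (by positivity)]
    have hc := count_mul_le' s hbal x W hW k
    have hc' : (((List.range (k * n)).map s).count x : ℝ) ≤ k * (W.count x + 1) := by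
      exact_mod_cast hc
    calc (((List.range (k * n)).map s).count x : ℝ) * n
        ≤ (k * (W.count x + 1) : ℝ) * n := by
          apply mul_le_mul_of_nonneg_right _ (by positivity)
          exact_mod_cast hc'
      _ = (W.count x + 1 : ℝ) * (k * n : ℕ) := by push_cast; ring
  calc (n : ℝ) * f ≤ n * ((W.count x + 1 : ℝ) / n) := by
        apply mul_le_mul_of_nonneg_left hle (by positivity)
    _ = W.count x + 1 := by field_simp

/-- A factor rich in `x` has `x`-density strictly above the frequency of `x` in `s`. -/
theorem stmt_6 (s : ℕ → Bool) (hs : Sturmian s) (x : Bool) (f : ℝ)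
    (hfreq : Filter.Tendsto
      (fun n : ℕ => ((((List.range n).map s).count x : ℝ)) / n) Filter.atTop (nhds f))
    (hirr : Irrational f)
    (U : List Bool) (hU : FactorOf s U) (hne : U ≠ []) (hrich : RichIn s U x) :
    f < (U.count x : ℝ) / U.length := by
  obtain ⟨V, hV, hlen, hcount⟩ := hrich
  have hVne : V ≠ [] := by
    intro h
    rw [h] at hlen
    exact hne (List.length_eq_zero_iff.mp hlen.symm)
  have hb := freq_bound' s hs.2 x f hfreq V hV hVne
  have hn0 : 0 < U.length := List.length_pos_iff.mpr hne
  have hle : (U.length : ℝ) * f ≤ U.count x := by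
    rw [← hlen]
    have : (V.count x : ℝ) + 1 ≤ U.count x := by exact_mod_cast hcount
    linarith
  have hne2 : (U.length : ℝ) * f ≠ U.count x := by
    have : Irrational ((U.length : ℕ) * f) := hirr.natCast_mul hn0.ne'
    intro h
    exact (this.ne_int (U.count x)) (by exact_mod_cast h)
  have hlt : (U.length : ℝ) * f < U.count x := lt_of_le_of_ne hle hne2
  rw [lt_div_iff₀ (by positivity)]
  linarith
end

section
/- Let s be a Sturmian word factorized as s = U_1 U_2 ⋯ where each U_i is a non-empty factor of s, and suppose all U_i are rich in the same letter. Then the lengths |U_i| are unbounded: for every M > 0 there exists i with |U_i| > M. -/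
namespace Stmt7Aux

/-- The window of `s` of length `n` starting at `i`. -/
def W (s : ℕ → Bool) (i n : ℕ) : List Bool := (List.range n).map fun k => s (i + k)

lemma length_W (s : ℕ → Bool) (i n : ℕ) : (W s i n).length = n := by simp [W]

lemma factor_W (s : ℕ → Bool) (i n : ℕ) : FactorOf s (W s i n) :=
  ⟨i, by rw [length_W]; rfl⟩

lemma W_add (s : ℕ → Bool) (i a b : ℕ) : W s i (a + b) = W s i a ++ W s (i + a) b := by
  simp only [W, List.range_add, List.map_append, List.map_map]
  congr 1
  apply List.map_congr_left
  intro x _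
  simp [Function.comp, add_assoc]

/-- Number of occurrences of `z` in the window. -/
def cnt (s : ℕ → Bool) (z : Bool) (i n : ℕ) : ℕ := (W s i n).count z

lemma cnt_add (s : ℕ → Bool) (z : Bool) (i a b : ℕ) :
    cnt s z i (a + b) = cnt s z i a + cnt s z (i + a) b := by
  simp [cnt, W_add, List.count_append]

lemma cnt_le (s : ℕ → Bool) (z : Bool) (i n : ℕ) : cnt s z i n ≤ n := by
  simpa [cnt, length_W] using List.count_le_length (l := W s i n) (a := z)

lemma count_not (l : List Bool) (z : Bool) : l.count z + l.count (!z) = l.length := by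
  induction l with
  | nil => simp
  | cons a l ih =>
    simp only [List.count_cons, List.length_cons]
    cases a <;> cases z <;> simp only [Bool.not_false, Bool.not_true] at ih ⊢ <;> simp <;> omega

lemma cnt_not (s : ℕ → Bool) (z : Bool) (i n : ℕ) : cnt s z i n + cnt s (!z) i n = n := by
  have := count_not (W s i n) z
  simpa [cnt, length_W] using this

noncomputable def fmin (s : ℕ → Bool) (z : Bool) (n : ℕ) : ℕ :=
  sInf {c | ∃ i, cnt s z i n = c}

lemma fmin_le (s : ℕ → Bool) (z : Bool) (i n : ℕ) : fmin s z n ≤ cnt s z i n :=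
  Nat.sInf_le ⟨i, rfl⟩

lemma exists_fmin (s : ℕ → Bool) (z : Bool) (n : ℕ) : ∃ i, cnt s z i n = fmin s z n :=
  Nat.sInf_mem (⟨cnt s z 0 n, 0, rfl⟩ : {c | ∃ i, cnt s z i n = c}.Nonempty)

noncomputable def hmax (s : ℕ → Bool) (z : Bool) (n : ℕ) : ℕ := n - fmin s (!z) n

lemma fmin_le_n (s : ℕ → Bool) (z : Bool) (n : ℕ) : fmin s z n ≤ n :=
  le_trans (fmin_le s z 0 n) (cnt_le s z 0 n)

lemma cnt_le_hmax (s : ℕ → Bool) (z : Bool) (i n : ℕ) : cnt s z i n ≤ hmax s z n := by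
  have h1 := cnt_not s z i n
  have h2 := fmin_le s (!z) i n
  have h3 := fmin_le_n s (!z) n
  unfold hmax
  omega

lemma exists_hmax (s : ℕ → Bool) (z : Bool) (n : ℕ) : ∃ i, cnt s z i n = hmax s z n := by
  obtain ⟨i, hi⟩ := exists_fmin s (!z) n
  refine ⟨i, ?_⟩
  have h1 := cnt_not s z i n
  have h3 := fmin_le_n s (!z) n
  unfold hmax
  omega

lemma hmax_le_balanced {s : ℕ → Bool} (hb : BalancedW s) (z : Bool) (n : ℕ) :
    hmax s z n ≤ fmin s z n + 1 := by
  obtain ⟨i, hi⟩ := exists_fmin s z n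
  obtain ⟨j, hj⟩ := exists_hmax s z n
  have := hb (W s j n) (W s i n) (factor_W s j n) (factor_W s i n)
    (by rw [length_W, length_W]) z
  rw [abs_le] at this
  have h1 : ((W s j n).count z : ℤ) = (cnt s z j n : ℤ) := rfl
  have h2 : ((W s i n).count z : ℤ) = (cnt s z i n : ℤ) := rfl
  rw [h1, h2, hi, hj] at this
  omega

lemma fmin_superadd (s : ℕ → Bool) (z : Bool) (a b : ℕ) :
    fmin s z a + fmin s z b ≤ fmin s z (a + b) := by
  obtain ⟨i, hi⟩ := exists_fmin s z (a + b)
  rw [← hi, cnt_add]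
  exact Nat.add_le_add (fmin_le s z i a) (fmin_le s z (i + a) b)

lemma hmax_subadd (s : ℕ → Bool) (z : Bool) (a b : ℕ) :
    hmax s z (a + b) ≤ hmax s z a + hmax s z b := by
  obtain ⟨i, hi⟩ := exists_hmax s z (a + b)
  rw [← hi, cnt_add]
  exact Nat.add_le_add (cnt_le_hmax s z i a) (cnt_le_hmax s z (i + a) b)

lemma hmax_zero (s : ℕ → Bool) (z : Bool) : hmax s z 0 = 0 := by
  simp [hmax]

lemma hmax_mul (s : ℕ → Bool) (z : Bool) (k n : ℕ) : hmax s z (k * n) ≤ k * hmax s z n := by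
  induction k with
  | zero => simp [hmax_zero]
  | succ k ih =>
    have : (k + 1) * n = k * n + n := by ring
    rw [this, add_mul, one_mul]
    exact le_trans (hmax_subadd s z (k * n) n) (Nat.add_le_add ih (le_refl _))

lemma fmin_mul (s : ℕ → Bool) (z : Bool) (k n : ℕ) : k * fmin s z n ≤ fmin s z (k * n) := by
  induction k with
  | zero => simp
  | succ k ih =>
    have h1 : (k + 1) * n = k * n + n := by ring
    rw [h1, add_mul, one_mul]
    exact le_trans (Nat.add_le_add ih (le_refl _)) (fmin_superadd s z (k * n) n)

lemma fmin_le_hmax (s : ℕ → Bool) (z : Bool) (n : ℕ) : fmin s z n ≤ hmax s z n := by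
  obtain ⟨i, hi⟩ := exists_fmin s z n
  rw [← hi]; exact cnt_le_hmax s z i n

lemma key_mul (s : ℕ → Bool) (z : Bool) (m N : ℕ) :
    m * fmin s z N ≤ N * hmax s z m :=
  calc m * fmin s z N ≤ fmin s z (m * N) := fmin_mul s z m N
    _ ≤ hmax s z (m * N) := fmin_le_hmax s z (m * N)
    _ = hmax s z (N * m) := by rw [mul_comm]
    _ ≤ N * hmax s z m := hmax_mul s z N m

lemma cnt_one (s : ℕ → Bool) (z : Bool) (q : ℕ) :
    cnt s z q 1 = if s q = z then 1 else 0 := by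
  have : List.range 1 = [0] := rfl
  simp only [cnt, W, this, List.map_cons, List.map_nil, add_zero]
  cases hq : s q <;> cases z <;> simp_all

lemma claimA {s : ℕ → Bool} (hs : Sturmian s) (z : Bool) (n : ℕ) (hn : 1 ≤ n)
    (c : ℕ) (hc : hmax s z n = c) (hfc : fmin s z n + 1 = c) :
    ∀ P, ∃ p, P ≤ p ∧ cnt s z p n < c := by
  intro P
  by_contra h
  push_neg at h
  have hall : ∀ p, P ≤ p → cnt s z p n = c := by
    intro p hp
    have h1 := h p hp
    have h2 := cnt_le_hmax s z p n
    omega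
  apply hs.1
  refine ⟨n, hn, P, ?_⟩
  intro q hq
  have e1 : cnt s z q (n + 1) = cnt s z q n + cnt s z (q + n) 1 := cnt_add s z q n 1
  have e2 : cnt s z q (1 + n) = cnt s z q 1 + cnt s z (q + 1) n := cnt_add s z q 1 n
  have e3 : n + 1 = 1 + n := by omega
  rw [e3] at e1
  rw [hall q hq] at e1
  rw [hall (q + 1) (by omega)] at e2
  rw [cnt_one] at e1
  rw [cnt_one] at e2
  cases h1 : s q <;> cases h2 : s (q + n) <;> cases z <;> simp_all <;> omega

lemma claimB {s : ℕ → Bool} (z : Bool) (n : ℕ)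
    (c : ℕ) (hc : hmax s z n = c)
    (hfkn : ∀ k, 1 ≤ k → k * c ≤ fmin s z (k * n) + 1) :
    ∀ p j, cnt s z p n < c → 1 ≤ j → cnt s z (p + j * n) n = c := by
  intro p j hp hj
  -- first: cnt s z (p+n) (j*n) = j * c
  have e1 : cnt s z p (n + j * n) = cnt s z p n + cnt s z (p + n) (j * n) :=
    cnt_add s z p n (j * n)
  have e2 : n + j * n = (j + 1) * n := by ring
  rw [e2] at e1
  have lower : (j + 1) * c ≤ cnt s z p ((j + 1) * n) + 1 :=
    le_trans (hfkn (j + 1) (by omega)) (by have := fmin_le s z p ((j + 1) * n); omega)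
  have upper1 : cnt s z (p + n) (j * n) ≤ j * c := by
    have h1 := cnt_le_hmax s z (p + n) (j * n)
    have h2 := hmax_mul s z j n
    rw [hc] at h2
    omega
  have hjc : (j + 1) * c = j * c + c := by ring
  have hX : cnt s z (p + n) (j * n) = j * c := by omega
  -- second split
  obtain ⟨j', rfl⟩ : ∃ j', j = j' + 1 := ⟨j - 1, by omega⟩
  have e3 : cnt s z (p + n) (j' * n + n)
      = cnt s z (p + n) (j' * n) + cnt s z (p + n + j' * n) n := cnt_add s z (p + n) (j' * n) n
  have e4 : (j' + 1) * n = j' * n + n := by ring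
  rw [e4] at hX
  have upper2 : cnt s z (p + n) (j' * n) ≤ j' * c := by
    have h1 := cnt_le_hmax s z (p + n) (j' * n)
    have h2 := hmax_mul s z j' n
    rw [hc] at h2
    omega
  have upper3 : cnt s z (p + n + j' * n) n ≤ c := by
    have := cnt_le_hmax s z (p + n + j' * n) n; omega
  have hpos : p + (j' + 1) * n = p + n + j' * n := by ring
  rw [hpos]
  have hjc2 : (j' + 1) * c = j' * c + c := by ring
  omega

lemma seven {s : ℕ → Bool} (hs : Sturmian s) (z : Bool) (n : ℕ) (hn : 1 ≤ n) :
    ∃ m, 1 ≤ m ∧ n * hmax s z m < m * (fmin s z n + 1) := by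
  by_contra h
  push_neg at h
  have h' : ∀ m, 1 ≤ m → m * (fmin s z n + 1) ≤ n * hmax s z m := by
    intro m hm
    have := h m
    omega
  set c := fmin s z n + 1 with hcdef
  have hb := hs.2
  have hhn : hmax s z n = c := by
    have h1 : hmax s z n ≤ c := hmax_le_balanced hb z n
    have h2 : n * c ≤ n * hmax s z n := h' n hn
    have h3 : c ≤ hmax s z n := Nat.le_of_mul_le_mul_left h2 (by omega)
    omega
  have hfkn : ∀ k, 1 ≤ k → k * c ≤ fmin s z (k * n) + 1 := by
    intro k hk
    have h2 : (k * n) * c ≤ n * hmax s z (k * n) := h' (k * n) (Nat.one_le_iff_ne_zero.mpr (by positivity))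
    have h3 : n * (k * c) ≤ n * hmax s z (k * n) := by
      calc n * (k * c) = (k * n) * c := by ring
        _ ≤ n * hmax s z (k * n) := h2
    have h4 : k * c ≤ hmax s z (k * n) := Nat.le_of_mul_le_mul_left h3 (by omega)
    have h5 := hmax_le_balanced hb z (k * n)
    omega
  have hA := claimA hs z n hn c hhn rfl
  have hB := claimB z n c hhn hfkn
  -- build strictly increasing sequence of poor positions
  choose g hg1 hg2 using hA
  set q : ℕ → ℕ := fun t => Nat.rec (g 0) (fun _ prev => g (prev + 1)) t with hqdef
  have hq_succ : ∀ t, q (t + 1) = g (q t + 1) := fun t => rfl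
  have hq_poor : ∀ t, cnt s z (q t) n < c := by
    intro t
    cases t with
    | zero => exact hg2 0
    | succ t => rw [hq_succ]; exact hg2 (q t + 1)
  have hq_lt : ∀ t, q t < q (t + 1) := by
    intro t
    rw [hq_succ]
    have := hg1 (q t + 1)
    omega
  have hq_mono : StrictMono q := strictMono_nat_of_lt_succ hq_lt
  -- pigeonhole on residues mod n
  have hmaps : ∀ t ∈ Finset.range (n + 1), q t % n ∈ Finset.range n := by
    intro t _
    exact Finset.mem_range.mpr (Nat.mod_lt _ (by omega))
  obtain ⟨a, ha, b, hbmem, hab, heq⟩ :=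
    Finset.exists_ne_map_eq_of_card_lt_of_maps_to
      (by simp : (Finset.range n).card < (Finset.range (n + 1)).card) hmaps
  wlog hlt : a < b generalizing a b
  · exact this b hbmem a ha (Ne.symm hab) heq.symm (by omega)
  have hqlt : q a < q b := hq_mono hlt
  have hdvd : n ∣ q b - q a := (Nat.modEq_iff_dvd' (le_of_lt hqlt)).mp heq
  obtain ⟨j, hj⟩ := hdvd
  have hj1 : 1 ≤ j := by
    rcases Nat.eq_zero_or_pos j with h0 | h1
    · rw [h0, Nat.mul_zero] at hj; omega
    · exact h1
  have := hB (q a) j (hq_poor a) hj1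
  have hqb : q a + j * n = q b := by
    rw [Nat.mul_comm j n]
    omega
  rw [hqb] at this
  have := hq_poor b
  omega

lemma combine {s : ℕ → Bool} (hs : Sturmian s) (z : Bool) (M : ℕ) :
    ∃ m, 1 ≤ m ∧ ∀ n, 1 ≤ n → n ≤ M → n * hmax s z m < m * (fmin s z n + 1) := by
  induction M with
  | zero => exact ⟨1, le_refl 1, fun n h1 h2 => by omega⟩
  | succ M ih =>
    obtain ⟨a, ha1, ha⟩ := ih
    obtain ⟨b, hb1, hb⟩ := seven hs z (M + 1) (by omega)
    refine ⟨a * b, Nat.one_le_iff_ne_zero.mpr (by positivity), ?_⟩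
    intro n h1 h2
    rcases Nat.lt_or_ge n (M + 1) with hn | hn
    · -- n ≤ M : use a
      have hna := ha n h1 (by omega)
      have hsub : hmax s z (a * b) ≤ b * hmax s z a := by
        rw [mul_comm a b]; exact hmax_mul s z b a
      calc n * hmax s z (a * b) ≤ n * (b * hmax s z a) := Nat.mul_le_mul_left n hsub
        _ = b * (n * hmax s z a) := by ring
        _ < b * (a * (fmin s z n + 1)) := by
              exact mul_lt_mul_of_pos_left hna (by omega)
        _ = a * b * (fmin s z n + 1) := by ring
    · -- n = M + 1 : use b
      have hn' : n = M + 1 := by omega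
      have hnb : n * hmax s z b < b * (fmin s z n + 1) := by rw [hn']; exact hb
      have hsub : hmax s z (a * b) ≤ a * hmax s z b := hmax_mul s z a b
      calc n * hmax s z (a * b) ≤ n * (a * hmax s z b) := Nat.mul_le_mul_left n hsub
        _ = a * (n * hmax s z b) := by ring
        _ < a * (b * (fmin s z n + 1)) := by
              exact mul_lt_mul_of_pos_left hnb (by omega)
        _ = a * b * (fmin s z n + 1) := by ring

end Stmt7Aux

open Stmt7Aux in
theorem stmt_7' (s : ℕ → Bool) (hs : Sturmian s) (U : ℕ → List Bool)
    (hfac : Factorization s U) (hF : ∀ i, FactorOf s (U i))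
    (z : Bool) (hrich : ∀ i, RichIn s (U i) z) :
    ∀ M : ℕ, ∃ i, M < (U i).length := by
  intro M
  by_contra h
  push_neg at h
  have hb := hs.2
  set L : ℕ → ℕ := fun i => (U i).length with hL
  have hL1 : ∀ i, 1 ≤ L i := fun i => List.length_pos_iff.mpr (hfac.1 i)
  -- richness lower bound
  have hcount : ∀ i, fmin s z (L i) + 1 ≤ (U i).count z := by
    intro i
    obtain ⟨v, hvF, hvlen, hvlt⟩ := hrich i
    obtain ⟨i', hi'⟩ := hvF
    have hfv : fmin s z (L i) ≤ v.count z := by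
      have h2 : cnt s z i' (L i) = v.count z := by
        have h3 : L i = v.length := hvlen.symm
        rw [h3]
        unfold cnt W
        rw [← hi']
      rw [← h2]
      exact fmin_le s z i' (L i)
    omega
  obtain ⟨m, hm1, hm⟩ := combine hs z M
  set k := m + 1 with hk
  -- the prefix of length N
  have hpre := hfac.2 k
  set J := ((List.range k).map U).flatten with hJ
  have hNlen : J.length = ∑ i ∈ Finset.range k, L i := by
    rw [hJ, List.length_flatten, List.map_map]
    rfl
  have hJW : J = W s 0 J.length := by
    have hW : W s 0 J.length = (List.range J.length).map s := by simp [W]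
    rw [hW]
    exact hpre
  have hJcount : J.count z = ∑ i ∈ Finset.range k, (U i).count z := by
    rw [hJ, List.count_flatten, List.map_map]
    rfl
  set N := ∑ i ∈ Finset.range k, L i with hN
  -- upper bound on the prefix count
  have hup : J.count z ≤ fmin s z N + 1 := by
    have h1 : J.count z = cnt s z 0 N := by
      rw [hJW]; unfold cnt; rw [hNlen]
    rw [h1]
    have h2 := cnt_le_hmax s z 0 N
    have h3 := hmax_le_balanced hb z N
    omega
  -- lower bound
  have hlow : ∑ i ∈ Finset.range k, (fmin s z (L i) + 1) ≤ J.count z := by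
    rw [hJcount]
    exact Finset.sum_le_sum fun i _ => hcount i
  -- per-term strict inequality from combine
  have hterm : ∀ i ∈ Finset.range k, L i * hmax s z m + 1 ≤ m * (fmin s z (L i) + 1) :=
    fun i _ => hm (L i) (hL1 i) (h i)
  -- combine everything
  have hchain1 : m * (∑ i ∈ Finset.range k, (fmin s z (L i) + 1)) ≤ N * hmax s z m + m := by
    have := key_mul s z m N
    have h4 : m * (∑ i ∈ Finset.range k, (fmin s z (L i) + 1)) ≤ m * (fmin s z N + 1) :=
      Nat.mul_le_mul_left m (le_trans hlow hup)
    have h5 : m * (fmin s z N + 1) = m * fmin s z N + m := by ring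
    omega
  have hchain2 : N * hmax s z m + k ≤ m * (∑ i ∈ Finset.range k, (fmin s z (L i) + 1)) := by
    rw [Finset.mul_sum, hN, Finset.sum_mul]
    calc (∑ i ∈ Finset.range k, L i * hmax s z m) + k
        = ∑ i ∈ Finset.range k, (L i * hmax s z m + 1) := by
          rw [Finset.sum_add_distrib, Finset.sum_const, Finset.card_range, smul_eq_mul, mul_one]
      _ ≤ ∑ i ∈ Finset.range k, m * (fmin s z (L i) + 1) := Finset.sum_le_sum hterm
  omega

/-- In a factorization of a Sturmian word into factors all rich in the same letter,
the lengths are unbounded. -/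
theorem stmt_7 (s : ℕ → Bool) (hs : Sturmian s) (U : ℕ → List Bool)
    (hfac : Factorization s U) (hF : ∀ i, FactorOf s (U i))
    (z : Bool) (hrich : ∀ i, RichIn s (U i) z) :
    ∀ M : ℕ, ∃ i, M < (U i).length :=
  stmt_7' s hs U hfac hF z hrich
end

section
/- There exists a Sturmian word s and an infinite binary word t with R(t) = s (where R(a)=a, R(b)=ba) such that t is not balanced. Concretely, if f is the Fibonacci word, then s = a·f is Sturmian but the word t with R(t) = s is not balanced. -/
/-- The Fibonacci morphism `a ↦ ab, b ↦ a` (recall `a = false`, `b = true`). -/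
def FibMor : Bool → List Bool := fun x => if x then [false] else [false, true]

def FibStep (l : List Bool) : List Bool := (l.map FibMor).flatten

/-- The Fibonacci word: the fixed point of the Fibonacci morphism. -/
def FibWord : ℕ → Bool := fun n => (FibStep^[n + 2] [false]).getD n false

/-- The word `s = a · f` (`f` the Fibonacci word). -/
def AFib : ℕ → Bool := fun n => match n with
  | 0 => false
  | n + 1 => FibWord n

noncomputable def alp : ℝ := (Real.sqrt 5 - 1) / 2
lemma sqrt5_lt : Real.sqrt 5 < 3 := by
  nlinarith [Real.sq_sqrt (by norm_num : (5:ℝ) ≥ 0), Real.sqrt_nonneg 5]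
lemma lt_sqrt5 : 2 < Real.sqrt 5 := by
  nlinarith [Real.sq_sqrt (by norm_num : (5:ℝ) ≥ 0), Real.sqrt_nonneg 5]
lemma alp_pos : 0 < alp := by unfold alp; nlinarith [lt_sqrt5]
lemma alp_lt_one : alp < 1 := by unfold alp; nlinarith [sqrt5_lt]
lemma half_lt_alp : 1/2 < alp := by unfold alp; nlinarith [lt_sqrt5]
lemma alp_sq : alp^2 = 1 - alp := by
  unfold alp; nlinarith [Real.sq_sqrt (by norm_num : (5:ℝ) ≥ 0)]
lemma irr_alp : Irrational alp := by
  unfold alp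
  have h5 : Irrational (Real.sqrt 5) := by
    have := Nat.Prime.irrational_sqrt (p := 5) (by norm_num)
    simpa using this
  have h1 : Irrational (Real.sqrt 5 - 1) := by
    simpa using h5.sub_ratCast 1
  simpa using h1.div_ratCast (by norm_num : (2:ℚ) ≠ 0)

noncomputable def bb (m : ℕ) : ℕ := (⌊(m:ℝ) * alp⌋).toNat

lemma bb_cast (m : ℕ) : ((bb m : ℝ)) = ((⌊(m:ℝ) * alp⌋ : ℤ) : ℝ) := by
  have h0 : (0:ℤ) ≤ ⌊(m:ℝ) * alp⌋ :=
    Int.floor_nonneg.2 (mul_nonneg (Nat.cast_nonneg m) alp_pos.le)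
  rw [show ((bb m : ℝ)) = ((bb m : ℤ) : ℝ) by push_cast; ring]
  simp [bb, Int.toNat_of_nonneg h0]
lemma bb_le (m : ℕ) : (bb m : ℝ) ≤ m * alp := by
  rw [bb_cast]; exact Int.floor_le _
lemma bb_lt (m : ℕ) : (m:ℝ) * alp < bb m + 1 := by
  rw [bb_cast]; exact Int.lt_floor_add_one _
lemma irr_mul (m : ℕ) (hm : 1 ≤ m) : Irrational ((m:ℝ) * alp) :=
  irr_alp.natCast_mul (by omega)
lemma bb_lt' (m : ℕ) (hm : 1 ≤ m) : (bb m : ℝ) < m * alp := by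
  rcases lt_or_eq_of_le (bb_le m) with h | h
  · exact h
  · exact absurd h.symm ((irr_mul m hm).ne_nat (bb m))
lemma bb_eq (m k : ℕ) (h1 : (k:ℝ) ≤ m * alp) (h2 : (m:ℝ) * alp < k + 1) : bb m = k := by
  have h3 : (bb m : ℝ) < (k:ℝ) + 1 := lt_of_le_of_lt (bb_le m) h2
  have h4 : (k:ℝ) < (bb m : ℝ) + 1 := lt_of_le_of_lt h1 (bb_lt m)
  have h5 : bb m < k + 1 := by exact_mod_cast h3
  have h6 : k < bb m + 1 := by exact_mod_cast h4
  omega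

lemma bb_step (m : ℕ) : bb (m+1) = bb m ∨ bb (m+1) = bb m + 1 := by
  have h1 := bb_le m; have h2 := bb_lt m
  have h3 := bb_le (m+1); have h4 := bb_lt (m+1)
  have ha := alp_pos; have hb := alp_lt_one
  push_cast at h3 h4
  have l1 : (bb (m+1) : ℝ) < (bb m : ℝ) + 2 := by nlinarith
  have l2 : (bb m : ℝ) < (bb (m+1) : ℝ) + 1 := by nlinarith
  have c1 : bb (m+1) < bb m + 2 := by exact_mod_cast l1
  have c2 : bb m < bb (m+1) + 1 := by exact_mod_cast l2
  omega
lemma bb1 : bb 1 = 0 := by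
  apply bb_eq <;> push_cast <;> nlinarith [alp_pos, alp_lt_one]
lemma bb2 : bb 2 = 1 := by
  apply bb_eq <;> push_cast <;> nlinarith [half_lt_alp, alp_lt_one]

lemma hs' (n : ℕ) : (n:ℝ) * alp^2 = n - n * alp := by
  rw [alp_sq]; ring

-- main floor lemmas
lemma L1a (m : ℕ) : bb ((m+1) + bb (m+1)) = m := by
  set n := m + 1 with hn
  have h1 := bb_lt' n (by omega)
  have h2 := bb_lt n
  have ha := alp_pos; have hb := alp_lt_one
  have h1a := mul_lt_mul_of_pos_right h1 ha
  have h2a := mul_lt_mul_of_pos_right h2 ha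
  have hq := hs' n
  have hbn : (0:ℝ) ≤ (bb n : ℝ) := Nat.cast_nonneg _
  apply bb_eq <;> push_cast [hn] <;> push_cast [hn] at h1 h2 h1a h2a hq <;> nlinarith
lemma L1b (m : ℕ) : bb ((m+1) + bb (m+1) + 1) = m + 1 := by
  set n := m + 1 with hn
  have h1 := bb_lt' n (by omega)
  have h2 := bb_lt n
  have ha := alp_pos; have hb := alp_lt_one
  have h1a := mul_lt_mul_of_pos_right h1 ha
  have h2a := mul_lt_mul_of_pos_right h2 ha
  have hq := hs' n
  apply bb_eq <;> push_cast [hn] <;> push_cast [hn] at h1 h2 h1a h2a hq <;> nlinarith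
lemma L2 (m : ℕ) (h : bb (m+2) = bb (m+1) + 1) : bb ((m+1) + bb (m+1) + 2) = m + 1 := by
  set n := m + 1 with hn
  have h1 := bb_lt' n (by omega)
  have h2 := bb_lt n
  have h3 := bb_lt' (n+1) (by omega)
  rw [show n + 1 = m + 2 by omega, h] at h3
  have ha := alp_pos; have hb := alp_lt_one
  have h1a := mul_lt_mul_of_pos_right h1 ha
  have h2a := mul_lt_mul_of_pos_right h2 ha
  have h3a := mul_lt_mul_of_pos_right h3 ha
  have hq := hs' n
  have hq1 := hs' (n+1)
  apply bb_eq <;> push_cast [hn] <;> push_cast [hn] at h1 h2 h3 h1a h2a h3a hq hq1 <;> nlinarith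

noncomputable def F (k : ℕ) : Bool := decide (bb (k+2) = bb (k+1))
noncomputable def pp (n : ℕ) : ℕ := n + bb (n+1)

lemma bb_mono : Monotone bb := by
  apply monotone_nat_of_le_succ
  intro m; rcases bb_step m with h | h <;> omega

lemma bb_succ_step (n : ℕ) : bb (n+2) = bb (n+1) ∨ bb (n+2) = bb (n+1) + 1 := bb_step (n+1)

lemma F_p_false (n : ℕ) : F (pp n) = false := by
  have h1 := L1a n
  have h2 := L1b n
  simp only [F, pp, decide_eq_false_iff_not]
  apply decide_eq_false
  intro hc
  rw [show n + bb (n+1) + 2 = (n+1) + bb (n+1) + 1 by omega,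
      show n + bb (n+1) + 1 = (n+1) + bb (n+1) by omega] at hc
  omega

lemma F_p1_true (n : ℕ) (h : F n = false) : F (pp n + 1) = true := by
  simp only [F, decide_eq_false_iff_not] at h
  have h' : bb (n+2) = bb (n+1) + 1 := by rcases bb_succ_step n with h2 | h2 <;> omega
  have h1 := L1b n
  have h2 := L2 n h'
  simp only [F, pp, decide_eq_true_eq]
  apply decide_eq_true
  rw [show n + bb (n+1) + 1 + 2 = (n+1) + bb (n+1) + 2 by omega,
      show n + bb (n+1) + 1 + 1 = (n+1) + bb (n+1) + 1 by omega]
  omega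

lemma key (n : ℕ) : ((List.range n).map (fun i => FibMor (F i))).flatten
    = (List.range (pp n)).map F := by
  induction n with
  | zero => simp [pp, bb1]
  | succ n ih =>
    simp only [List.range_succ, List.map_append, List.flatten_append, ih]
    cases hF : F n with
    | true =>
      have hp : pp (n+1) = pp n + 1 := by
        simp only [F, decide_eq_true_eq] at hF
        have hr : bb (n+1+1) = bb (n+2) := rfl
        simp only [pp]; omega
      rw [hp, List.range_succ, List.map_append]
      simp [FibMor, hF, F_p_false n]
    | false =>
      have hp : pp (n+1) = pp n + 2 := by
        simp only [F, decide_eq_false_iff_not] at hF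
        have h' : bb (n+2) = bb (n+1) + 1 := by rcases bb_succ_step n with h2 | h2 <;> omega
        have hr : bb (n+1+1) = bb (n+2) := rfl
        simp only [pp]; omega
      rw [hp, show pp n + 2 = (pp n + 1) + 1 by omega, List.range_succ, List.map_append,
          List.range_succ, List.map_append]
      simp [FibMor, hF, F_p1_true n hF, F_p_false n, List.append_assoc]

noncomputable def qq : ℕ → ℕ
  | 0 => 1
  | k+1 => pp (qq k)

lemma qq_ge (k : ℕ) : k + 1 ≤ qq k := by
  induction k with
  | zero => simp [qq]
  | succ k ih =>
    have h2 : 1 ≤ bb (qq k + 1) := by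
      have := bb_mono (show 2 ≤ qq k + 1 by omega)
      have := bb2
      omega
    simp only [qq, pp]; omega

lemma iter_eq (k : ℕ) : FibStep^[k] [false] = (List.range (qq k)).map F := by
  induction k with
  | zero =>
    have hF0 : F 0 = false := by simp [F, bb1, bb2]
    simp [qq, List.range_succ, hF0]
  | succ k ih =>
    rw [Function.iterate_succ_apply', ih]
    show ((List.map F (List.range (qq k))).map FibMor).flatten = _
    rw [List.map_map]
    exact key (qq k)

lemma fibword_eq (n : ℕ) : FibWord n = F n := by
  have h := iter_eq (n + 2)
  have hlt : n < qq (n + 2) := by have := qq_ge (n+2); omega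
  simp only [FibWord, h]
  rw [List.getD_eq_getElem?_getD, List.getElem?_eq_getElem (by simpa using hlt)]
  simp

noncomputable def cc (m : ℕ) : ℕ := if m = 0 then 0 else bb m + 1

lemma cc_succ (m : ℕ) : cc (m+1) = cc m + (if AFib m then 0 else 1) := by
  cases m with
  | zero => simp [cc, AFib, bb1]
  | succ m =>
    have h : AFib (m+1) = F m := fibword_eq m
    simp only [cc, h]
    rcases bb_step (m+1) with hs | hs <;>
      simp only [F, show m+1+1 = m+2 from rfl, hs] <;> simp

lemma afib_iff (m : ℕ) : AFib m = false ↔ cc (m+1) = cc m + 1 := by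
  have h := cc_succ m
  cases hA : AFib m
  · simp [hA] at h
    simp [h]
  · simp [hA] at h
    simp [h]

-- strict bounds
lemma cc_bounds (m : ℕ) (hm : 1 ≤ m) : (m:ℝ) * alp < cc m ∧ (cc m : ℝ) < m * alp + 1 := by
  have h1 := bb_lt' m hm
  have h2 := bb_lt m
  simp only [cc, if_neg (by omega : m ≠ 0)]
  constructor <;> push_cast <;> linarith

lemma count_false_window (i L : ℕ) :
    cc (i + L) = cc i + (((List.range L).map fun k => AFib (i + k)).count false) := by
  induction L with
  | zero => simp
  | succ L ih =>
    rw [show i + (L+1) = (i+L) + 1 from rfl, cc_succ (i+L), ih,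
        List.range_succ, List.map_append]
    cases hA : AFib (i + L) <;> simp [hA, List.count_append]
    omega

lemma count_true_add (u : List Bool) : u.count true + u.count false = u.length := by
  induction u with
  | nil => simp
  | cons a l ih => cases a <;> simp [List.count_cons, ih] <;> omega

-- integer bound for window counts
lemma window_bound (i L : ℕ) (hL : 1 ≤ L) :
    ((L:ℝ) * alp) - 1 < (cc (i+L) : ℝ) - cc i ∧ ((cc (i+L) : ℝ)) - cc i < L * alp + 1 := by
  rcases Nat.eq_zero_or_pos i with hi | hi
  · subst hi
    have h := cc_bounds L hL
    have h0 : cc 0 = 0 := by simp [cc]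
    rw [Nat.zero_add, h0]
    push_cast
    constructor <;> [linarith [h.1, alp_pos]; linarith [h.2]]
  · have h1 := cc_bounds i hi
    have h2 := cc_bounds (i + L) (by omega)
    push_cast at h2 ⊢
    constructor <;> nlinarith [h1.1, h1.2, h2.1, h2.2]

lemma count_diff_bound (i j L : ℕ) :
    |(((List.range L).map fun k => AFib (i + k)).count false : ℤ)
      - (((List.range L).map fun k => AFib (j + k)).count false : ℤ)| ≤ 1 := by
  rcases Nat.eq_zero_or_pos L with hL | hL
  · subst hL; simp
  · have hi := count_false_window i L
    have hj := count_false_window j L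
    set d1 := ((List.range L).map fun k => AFib (i + k)).count false with hd1
    set d2 := ((List.range L).map fun k => AFib (j + k)).count false with hd2
    have bi := window_bound i L hL
    have bj := window_bound j L hL
    have e1 : (d1 : ℝ) = (cc (i+L) : ℝ) - cc i := by
      rw [hi]; push_cast; ring
    have e2 : (d2 : ℝ) = (cc (j+L) : ℝ) - cc j := by
      rw [hj]; push_cast; ring
    have hb : |(d1 : ℝ) - (d2 : ℝ)| < 2 := by
      rw [abs_lt]; constructor <;> [nlinarith [bi.1, bj.2]; nlinarith [bi.2, bj.1]]
    have : |(d1 : ℤ) - (d2 : ℤ)| < 2 := by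
      have : ((|(d1 : ℤ) - (d2 : ℤ)| : ℤ) : ℝ) < 2 := by
        push_cast [abs_sub_lt_iff] at hb ⊢
        constructor <;> linarith [hb.1, hb.2]
      exact_mod_cast this
    omega

lemma balanced_afib : BalancedW AFib := by
  rintro u v ⟨i, hu⟩ ⟨j, hv⟩ hlen x
  set L := u.length with hL
  have hvL : v.length = L := hlen.symm
  rw [hvL] at hv
  have hcf := count_diff_bound i j L
  rw [← hu, ← hv] at hcf
  cases x with
  | false => exact hcf
  | true =>
    have hu' := count_true_add u
    have hv' := count_true_add v
    have : u.length = L := hL.symm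
    have h2 : (u.count true : ℤ) - v.count true = (v.count false : ℤ) - u.count false := by
      have : u.count true + u.count false = L := by omega
      have : v.count true + v.count false = L := by omega
      omega
    rw [h2, abs_sub_comm]
    exact hcf

lemma aperiodic_afib : ¬ EventuallyPeriodic AFib := by
  rintro ⟨p, hp, N, hper⟩
  -- cc (m + p) = cc m + c for all m ≥ N
  set c := cc (N + p) - cc N with hc
  have hccmono : ∀ m, cc m ≤ cc (m+1) := fun m => by
    have := cc_succ m; omega
  have mono : Monotone cc := monotone_nat_of_le_succ hccmono
  have hcd : cc N + c = cc (N + p) := by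
    have : cc N ≤ cc (N + p) := mono (by omega)
    omega
  have step : ∀ m ≥ N, cc (m + p) = cc m + c → cc (m + 1 + p) = cc (m + 1) + c := by
    intro m hm h
    have e1 := cc_succ (m + p)
    have e2 := cc_succ m
    have := hper m hm
    rw [show m + p + 1 = m + 1 + p by omega] at e1
    rw [this] at e1
    omega
  have main : ∀ m ≥ N, cc (m + p) = cc m + c := by
    intro m hm
    induction m with
    | zero => simpa [show N = 0 by omega] using hcd.symm
    | succ m ih =>
      rcases Nat.lt_or_ge m N with h | h
      · have : N = m + 1 := by omega
        rw [← this]; omega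
      · exact step m h (ih h)
  have iter : ∀ k, cc (N + k * p) = cc N + k * c := by
    intro k
    induction k with
    | zero => simp
    | succ k ih =>
      have := main (N + k * p) (by omega)
      rw [show N + (k+1) * p = N + k * p + p by ring, add_mul, one_mul]
      omega
  -- now real bounds
  have hpirr : Irrational ((p:ℝ) * alp) := irr_mul p hp
  have hne : ((c:ℝ) - p * alp) ≠ 0 := by
    intro h
    exact (hpirr.ne_nat c) (by linarith)
  set ε := |(c:ℝ) - p * alp| with hε
  have hεpos : 0 < ε := abs_pos.2 hne
  obtain ⟨k, hk⟩ := exists_nat_gt (((N:ℝ) * alp + (cc N) + 2) / ε)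
  have hk1 : ((N:ℝ) * alp + cc N + 2) < k * ε := by
    rw [div_lt_iff₀ hεpos] at hk; linarith
  have hkpos : 0 < k := by
    rcases Nat.eq_zero_or_pos k with h0 | h0
    · exfalso
      subst h0
      have h1 : (0:ℝ) ≤ (N:ℝ) * alp := mul_nonneg (Nat.cast_nonneg N) alp_pos.le
      have h2 : (0:ℝ) ≤ (cc N : ℝ) := Nat.cast_nonneg _
      push_cast at hk1
      linarith
    · exact h0
  have hbig : 1 ≤ N + k * p := by nlinarith [hkpos, hp]
  have hbnd := cc_bounds (N + k * p) hbig
  have hiter := iter k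
  have hcast : (cc (N + k * p) : ℝ) = (cc N : ℝ) + k * c := by
    rw [hiter]; push_cast; ring
  rw [hcast] at hbnd
  push_cast at hbnd
  have h1 : (0:ℝ) ≤ (N:ℝ) * alp := mul_nonneg (Nat.cast_nonneg N) alp_pos.le
  have h2 : (0:ℝ) ≤ (cc N : ℝ) := Nat.cast_nonneg _
  have habs : (k:ℝ) * ε = |(k:ℝ) * ((c:ℝ) - p * alp)| := by
    rw [hε, abs_mul, Nat.abs_cast]
  have hlt : |(k:ℝ) * ((c:ℝ) - p * alp)| < (N:ℝ) * alp + cc N + 1 := by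
    rw [abs_lt]
    constructor <;> nlinarith [hbnd.1, hbnd.2]
  rw [← habs] at hlt
  linarith


lemma no_bb (m : ℕ) (h : AFib m = true) : AFib (m+1) = false := by
  cases m with
  | zero => simp [AFib] at h
  | succ m =>
    by_contra hc
    rw [Bool.not_eq_false] at hc
    have e1 := cc_succ (m+1)
    rw [h] at e1
    simp at e1
    have e2 := cc_succ (m+2)
    rw [hc] at e2
    simp at e2
    have b1 := (cc_bounds (m+1) (by omega)).2
    have b2 := (cc_bounds (m+3) (by omega)).1
    have hha := half_lt_alp
    have e3 : (cc (m+3) : ℝ) = cc (m+1) := by rw [e2, e1]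
    push_cast at b1 b2 e3
    nlinarith

def rr : ℕ → ℕ
  | 0 => 0
  | n+1 => rr n + (if AFib (rr n) then 2 else 1)

def tdec (n : ℕ) : Bool := AFib (rr n)

lemma J_eq (n : ℕ) : ((List.range n).map fun i => Rmor (tdec i)).flatten
    = (List.range (rr n)).map AFib := by
  induction n with
  | zero => simp [rr]
  | succ n ih =>
    simp only [List.range_succ, List.map_append, List.flatten_append, ih]
    cases hA : AFib (rr n) with
    | false =>
      have hr : rr (n+1) = rr n + 1 := by simp [rr, hA]
      rw [hr, List.range_succ, List.map_append]
      simp [tdec, Rmor, hA]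
    | true =>
      have hr : rr (n+1) = rr n + 2 := by simp [rr, hA]
      rw [hr, show rr n + 2 = (rr n + 1) + 1 from rfl, List.range_succ, List.map_append,
          List.range_succ, List.map_append]
      simp [tdec, Rmor, hA, no_bb _ hA, List.append_assoc]

lemma subst_tdec : SubstEq Rmor tdec AFib := by
  intro n
  unfold PrefixOf
  rw [J_eq n]
  simp

-- uniqueness
lemma rmor_get (x : Bool) : (Rmor x)[0]? = some x := by cases x <;> rfl
lemma rmor_pos (x : Bool) : 0 < (Rmor x).length := by cases x <;> simp [Rmor]

lemma extract (t : ℕ → Bool) (ht : SubstEq Rmor t AFib) (n : ℕ)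
    (hlen : (((List.range n).map fun i => Rmor (t i)).flatten).length = rr n) :
    t n = AFib (rr n) := by
  have h := ht (n+1)
  unfold PrefixOf at h
  have hsplit : ((List.range (n+1)).map fun i => Rmor (t i)).flatten
      = (((List.range n).map fun i => Rmor (t i)).flatten) ++ Rmor (t n) := by
    simp [List.range_succ]
  rw [hsplit] at h
  have hidx : rr n < ((((List.range n).map fun i => Rmor (t i)).flatten) ++ Rmor (t n)).length := by
    have := rmor_pos (t n)
    rw [List.length_append, hlen]
    omega
  have e4 := congrArg (fun l => l[rr n]?) h
  rw [List.getElem?_append_right (by rw [hlen] : (((List.range n).map fun i => Rmor (t i)).flatten).length ≤ rr n)] at e4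
  rw [hlen, Nat.sub_self, rmor_get] at e4
  rw [List.getElem?_map, List.getElem?_range (by simpa using hidx)] at e4
  simpa using e4

lemma lenJ (t : ℕ → Bool) (ht : SubstEq Rmor t AFib) :
    ∀ n, (((List.range n).map fun i => Rmor (t i)).flatten).length = rr n := by
  intro n
  induction n with
  | zero => simp [rr]
  | succ n ih =>
    have htn := extract t ht n ih
    have hsplit : ((List.range (n+1)).map fun i => Rmor (t i)).flatten
        = (((List.range n).map fun i => Rmor (t i)).flatten) ++ Rmor (t n) := by
      simp [List.range_succ]
    rw [hsplit, List.length_append, ih, htn]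
    show rr n + (Rmor (AFib (rr n))).length = rr (n+1)
    simp only [rr]
    cases AFib (rr n) <;> simp [Rmor]

lemma tval (t : ℕ → Bool) (ht : SubstEq Rmor t AFib) (n : ℕ) : t n = tdec n :=
  extract t ht n (lenJ t ht n)

-- concrete values
lemma tdec0 : tdec 0 = false := by decide
lemma tdec1 : tdec 1 = false := by decide
lemma tdec4 : tdec 4 = true := by decide
lemma tdec5 : tdec 5 = true := by decide

lemma unbalanced (t : ℕ → Bool) (ht : SubstEq Rmor t AFib) : ¬ BalancedW t := by
  intro hb
  have f1 : FactorOf t [false, false] := by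
    refine ⟨0, ?_⟩
    have h0 := tval t ht 0
    have h1 := tval t ht 1
    simp [List.range_succ, h0, h1, tdec0, tdec1]
  have f2 : FactorOf t [true, true] := by
    refine ⟨4, ?_⟩
    have h4 := tval t ht 4
    have h5 := tval t ht 5
    simp [List.range_succ, h4, h5, tdec4, tdec5]
  have := hb [false, false] [true, true] f1 f2 rfl false
  norm_num [List.count_cons] at this


/-- `s = a·f` is Sturmian, but the word `t` with `R(t) = s` is not balanced. -/
theorem stmt_10 :
    Sturmian AFib ∧ (∃ t, SubstEq Rmor t AFib) ∧
      ∀ t : ℕ → Bool, SubstEq Rmor t AFib → ¬ BalancedW t :=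
  ⟨⟨aperiodic_afib, balanced_afib⟩, ⟨tdec, subst_tdec⟩, unbalanced⟩
end

section
/- Let s be a Sturmian word admitting a factorization s = U_1 U_2 ⋯ where each U_i is a non-empty prefix of s, and let c be the first letter of s. Then U_1 is not a power of c, i.e., U_1 ≠ c^p for any p ≥ 1. -/
lemma PrefixOf.getElem' {s : ℕ → Bool} {u : List Bool} (h : PrefixOf s u)
    {k : ℕ} (hk : k < u.length) : u[k] = s k := by
  have : u[k]? = some (s k) := by
    conv_lhs => rw [h]
    rw [List.getElem?_map, List.getElem?_range (by simpa using hk)]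
    rfl
  simpa [List.getElem?_eq_getElem hk] using this

/-- The first block of a prefix-factorization of a Sturmian word is not a power of the
first letter. -/
theorem stmt_11 (s : ℕ → Bool) (hs : Sturmian s) (U : ℕ → List Bool)
    (hfac : Factorization s U) (hpre : ∀ i, PrefixOf s (U i)) :
    ∀ p : ℕ, 1 ≤ p → U 0 ≠ List.replicate p (s 0) := by
  intro p hp hU0
  set c := s 0 with hc
  have hex : ∃ n, s n ≠ c := by
    by_contra h
    push_neg at h
    exact hs.1 ⟨1, one_pos, 0, fun n _ => by rw [h (n+1), h n]⟩
  classical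
  set q := Nat.find hex with hqdef
  have hq : s q ≠ c := Nat.find_spec hex
  have hqmin : ∀ k < q, s k = c := fun k hk => by
    by_contra h; exact absurd (Nat.find_le h) (not_le.mpr hk)
  set Ln : ℕ → ℕ := fun n => (((List.range n).map U).flatten).length with hLn
  have hLsucc : ∀ n, Ln (n+1) = Ln n + (U n).length := by
    intro n
    simp [hLn, List.range_succ]
  have hLmono : ∀ n, n ≤ Ln n := by
    intro n
    induction n with
    | zero => simp [hLn]
    | succ n ih =>
      have h2 := hLsucc n
      have : 1 ≤ (U n).length := List.length_pos_iff.mpr (hfac.1 n)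
      omega
  have key : ∀ i k, k < (U i).length → s (Ln i + k) = s k := by
    intro i k hk
    have hW := hfac.2 (i+1)
    have hWlen : (((List.range (i+1)).map U).flatten).length = Ln i + (U i).length := hLsucc i
    have hlt : Ln i + k < (((List.range (i+1)).map U).flatten).length := by omega
    have h1 : (((List.range (i+1)).map U).flatten)[Ln i + k]'hlt = s (Ln i + k) :=
      hW.getElem' hlt
    have hA : (((List.range i).map U).flatten).length = Ln i := rfl
    have hsplit : ((List.range (i+1)).map U).flatten
        = ((List.range i).map U).flatten ++ U i := by
      simp [List.range_succ]
    have h2 : (((List.range (i+1)).map U).flatten)[Ln i + k]'hlt = (U i)[k] := by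
      rw [List.getElem_of_eq hsplit, List.getElem_append_right (by rw [hA]; omega)]
      simp only [hA]
      simp
    rw [← h1, h2, (hpre i).getElem' hk]
  have hexn : ∃ n, q < Ln n := ⟨q+1, lt_of_lt_of_le (Nat.lt_succ_self q) (hLmono (q+1))⟩
  set n := Nat.find hexn with hndef
  have hn : q < Ln n := Nat.find_spec hexn
  have hn0 : n ≠ 0 := by
    intro h
    rw [h] at hn
    simp [hLn] at hn
  obtain ⟨m, hm⟩ : ∃ m, n = m + 1 := ⟨n - 1, by omega⟩
  have hmle : Ln m ≤ q := by
    have := Nat.find_min hexn (m := m) (by omega)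
    omega
  have hklt : q - Ln m < (U m).length := by
    have h2 := hLsucc m
    rw [hm] at hn
    omega
  have hs2 : s q = s (q - Ln m) := by
    have := key m (q - Ln m) hklt
    rwa [Nat.add_sub_cancel' hmle] at this
  by_cases hLm : Ln m = 0
  · have hm0 : m = 0 := by
      by_contra h
      have := hLmono m
      omega
    subst hm0
    have hlen : (U 0).length = p := by rw [hU0]; simp
    have hqp : q < p := by omega
    have hb : q < (U 0).length := by omega
    have h1 : (U 0)[q]? = some (s q) := by
      rw [List.getElem?_eq_getElem hb, (hpre 0).getElem' hb]
    have h2 : (U 0)[q]? = some c := by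
      rw [hU0]
      simp [List.getElem?_replicate, hqp]
    exact hq (by simpa using h1.symm.trans h2)
  · exact hq (hs2.trans (hqmin _ (by omega)))
end

section
/- Let s be a Sturmian word of type a (containing no factor bb) with factorization s = U_1 U_2 ⋯ where each U_i is a non-empty prefix of s and all U_i are rich in the same letter. Then either every U_i ends in the letter a, or U_i a is a prefix of s for every i. -/
namespace S12

def c (s : ℕ → Bool) (i n : ℕ) : ℕ := ((List.range n).map fun k => s (i + k)).count true

lemma c_succ (s : ℕ → Bool) (i n : ℕ) :
    c s i (n+1) = c s i n + (if s (i+n) = true then 1 else 0) := by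
  simp [c, List.range_succ, List.count_append, List.count_cons]

lemma c_one (s : ℕ → Bool) (i : ℕ) : c s i 1 = if s i = true then 1 else 0 := by
  simpa [c] using c_succ s i 0

lemma c_add (s : ℕ → Bool) (i m t : ℕ) : c s i (m + t) = c s i m + c s (i + m) t := by
  induction t with
  | zero => simp [c]
  | succ t ih =>
      have h : i + (m + t) = i + m + t := (Nat.add_assoc i m t).symm
      rw [show m + (t+1) = (m+t)+1 from rfl, c_succ, ih, c_succ, h, Nat.add_assoc]

lemma c_factor (s : ℕ → Bool) (i n : ℕ) :
    FactorOf s ((List.range n).map fun k => s (i+k)) := ⟨i, by simp⟩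

lemma bal (s : ℕ → Bool) (hb : BalancedW s) (i j n : ℕ) : c s i n ≤ c s j n + 1 := by
  have h := hb _ _ (c_factor s i n) (c_factor s j n) (by simp) true
  have h2 := (abs_le.mp h).2
  simp only [c] at *
  omega

lemma map_range_ext {n : ℕ} {g g' : ℕ → Bool}
    (h : (List.range n).map g = (List.range n).map g') {u : ℕ} (hu : u < n) : g u = g' u := by
  have h2 := congrArg (fun l => l[u]?) h
  simpa [List.getElem?_map, List.getElem?_range, hu] using h2

lemma count_false_true (l : List Bool) : l.count false + l.count true = l.length := by
  induction l with
  | nil => rfl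
  | cons a l ih => cases a <;> simp [List.count_cons] <;> omega

lemma c_zero_left (s : ℕ → Bool) (n : ℕ) : c s 0 n = ((List.range n).map s).count true := by
  simp [c]

def Mlen (U : ℕ → List Bool) (i : ℕ) : ℕ := (((List.range i).map U).flatten).length

lemma join_succ (U : ℕ → List Bool) (i : ℕ) :
    ((List.range (i+1)).map U).flatten = ((List.range i).map U).flatten ++ U i := by
  simp [List.range_succ]

lemma Mlen_succ (U : ℕ → List Bool) (i : ℕ) :
    Mlen U (i+1) = Mlen U i + (U i).length := by
  simp [Mlen, join_succ]

lemma blockEq (s : ℕ → Bool) (U : ℕ → List Bool)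
    (hjoin : ∀ k, PrefixOf s (((List.range k).map U).flatten)) (i : ℕ) :
    U i = (List.range (U i).length).map fun k => s (Mlen U i + k) := by
  have h1 := hjoin i
  have h2 := hjoin (i+1)
  unfold PrefixOf at h1 h2
  have hA := join_succ U i
  have hlen : (((List.range (i+1)).map U).flatten).length = Mlen U i + (U i).length :=
    Mlen_succ U i
  rw [hlen, hA] at h2
  rw [List.range_add, List.map_append, List.map_map] at h2
  have hAi : ((List.range (Mlen U i)).map s) = ((List.range i).map U).flatten := h1.symm
  rw [hAi] at h2
  have := List.append_cancel_left h2
  simpa [Function.comp_def] using this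

lemma blockLetter (s : ℕ → Bool) (U : ℕ → List Bool)
    (hjoin : ∀ k, PrefixOf s (((List.range k).map U).flatten))
    (hpre : ∀ i, PrefixOf s (U i)) {i u : ℕ} (hu : u < (U i).length) :
    s (Mlen U i + u) = s u := by
  have h1 := (blockEq s U hjoin i).symm.trans (hpre i)
  exact map_range_ext h1 hu

lemma blockCount (s : ℕ → Bool) (U : ℕ → List Bool)
    (hjoin : ∀ k, PrefixOf s (((List.range k).map U).flatten))
    (hpre : ∀ i, PrefixOf s (U i)) (i : ℕ) :
    c s (Mlen U i) (U i).length = c s 0 (U i).length := by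
  have h1 := (blockEq s U hjoin i).symm.trans (hpre i)
  have h2 : ((List.range (U i).length).map fun k => s (Mlen U i + k)).count true
      = ((List.range (U i).length).map s).count true := by rw [h1]
  rw [c_zero_left]
  exact h2

end S12

open S12

/-- For a type-`a` Sturmian word factored into non-empty prefixes all rich in the same
letter: either every block ends in `a`, or every block extended by `a` is a prefix. -/
theorem stmt_12 (s : ℕ → Bool) (hs : Sturmian s) (htype : ¬ FactorOf s [true, true])
    (U : ℕ → List Bool) (hfac : Factorization s U) (hpre : ∀ i, PrefixOf s (U i))
    (z : Bool) (hrich : ∀ i, RichIn s (U i) z) :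
    (∀ i, (U i).getLast? = some false) ∨ (∀ i, PrefixOf s (U i ++ [false])) := by
  classical
  obtain ⟨hap, hb⟩ := hs
  obtain ⟨hne, hjoin⟩ := hfac
  by_contra hcon
  push_neg at hcon
  obtain ⟨⟨k0, hk0⟩, ⟨k1, hk1⟩⟩ := hcon
  have hlenpos : ∀ i, 0 < (U i).length := fun i => List.length_pos_iff.mpr (hne i)
  have hpre' : ∀ i, U i = (List.range (U i).length).map s := hpre
  have nobb : ∀ i, s i = true → s (i+1) = true → False := by
    intro i h1 h2
    exact htype ⟨i, by simp [List.range_succ, h1, h2]⟩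
  obtain ⟨m, hm⟩ : ∃ m, (U k0).length = m + 1 :=
    ⟨(U k0).length - 1, by have := hlenpos k0; omega⟩
  -- the last letter of U k0 is `true`
  have hlast : s m = true := by
    have h1 : (U k0).getLast? = some (s m) := by
      rw [hpre' k0, hm, List.range_succ, List.map_append]
      simp
    by_contra h'
    have h'' : s m = false := by simpa using h'
    rw [h''] at h1
    exact hk0 h1
  -- the letter following the prefix U k1 is `true`
  have hq : s (U k1).length = true := by
    by_contra h'
    have h'' : s (U k1).length = false := by simpa using h'
    apply hk1
    show U k1 ++ [false] = (List.range (U k1 ++ [false]).length).map s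
    have hl : (U k1 ++ [false]).length = (U k1).length + 1 := by simp
    rw [hl, List.range_succ, List.map_append, ← hpre' k1]
    simp [h'']
  cases z with
  | true =>
    -- rich in b witness for U k1
    obtain ⟨v, hvf, hvl, hvc⟩ := hrich k1
    obtain ⟨j, hj⟩ := hvf
    rw [hvl] at hj
    have hcv : v.count true = c s j (U k1).length := by rw [hj]; rfl
    have hcu : (U k1).count true = c s 0 (U k1).length := by
      rw [c_zero_left]; conv_lhs => rw [hpre' k1]
    rw [hcv, hcu] at hvc
    set q := (U k1).length with hqdef
    have e1 : c s 0 (1 + q) = c s 0 1 + c s 1 q := by simpa using c_add s 0 1 q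
    have e2 : c s 0 (q + 1) = c s 0 q + c s q 1 := by simpa using c_add s 0 q 1
    have e3 : (1 + q) = (q + 1) := by omega
    have hcq1 : c s q 1 = 1 := by rw [c_one, hq]; simp
    have hbal := bal s hb 1 j q
    have hs0 : s 0 = true := by
      by_contra h0
      have h0' : s 0 = false := by simpa using h0
      have hc01 : c s 0 1 = 0 := by rw [c_one, h0']; simp
      rw [e3] at e1
      omega
    have hbound1 : s (Mlen U k0 + m) = true := by
      rw [blockLetter s U hjoin hpre (by omega : m < (U k0).length)]
      exact hlast
    have hbound2 : s (Mlen U k0 + m + 1) = true := by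
      have hM : Mlen U k0 + m + 1 = Mlen U (k0+1) := by rw [Mlen_succ]; omega
      rw [hM]
      have hbl := blockLetter s U hjoin hpre (i := k0+1) (u := 0) (hlenpos (k0+1))
      have hbl' : s (Mlen U (k0+1)) = s 0 := by simpa using hbl
      rw [hbl', hs0]
    exact nobb _ hbound1 hbound2
  | false =>
    -- rich in a witnesses
    have richW : ∀ i, ∃ j, c s 0 (U i).length + 1 ≤ c s j (U i).length := by
      intro i
      obtain ⟨v, hvf, hvl, hvc⟩ := hrich i
      obtain ⟨j, hj⟩ := hvf
      rw [hvl] at hj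
      refine ⟨j, ?_⟩
      have hcv : v.count true = c s j (U i).length := by rw [hj]; rfl
      have hcu : (U i).count true = c s 0 (U i).length := by
        rw [c_zero_left]; conv_lhs => rw [hpre' i]
      have h1 := count_false_true v
      have h2 := count_false_true (U i)
      have h3 : (U i).length = (U i).length := rfl
      rw [hvl] at h1
      omega
    -- the letter after the `b` ending U k0 is `a`
    have hq0 : s (m + 1) = false := by
      by_contra h'
      exact nobb m hlast (by simpa using h')
    -- s 0 = false
    have hs0 : s 0 = false := by
      obtain ⟨j, hj⟩ := richW k0
      rw [hm] at hj
      have e1 : c s 0 (1 + (m+1)) = c s 0 1 + c s 1 (m+1) := by simpa using c_add s 0 1 (m+1)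
      have e2 : c s 0 ((m+1) + 1) = c s 0 (m+1) + c s (m+1) 1 := by
        simpa using c_add s 0 (m+1) 1
      have hc1 : c s (m+1) 1 = 0 := by rw [c_one, hq0]; simp
      have hbal := bal s hb j 1 (m+1)
      by_contra h0
      have h0' : s 0 = true := by simpa using h0
      have hc01 : c s 0 1 = 1 := by rw [c_one, h0']; simp
      have e3 : (1 + (m+1)) = ((m+1) + 1) := by omega
      rw [e3] at e1
      omega
    -- rich lemma: the word starting at position (U i).length dominates the prefix
    have RL : ∀ i t, c s 0 t ≤ c s ((U i).length) t := by
      intro i t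
      obtain ⟨j', hj'⟩ := richW i
      have a1 : c s 0 ((U i).length + t) = c s 0 (U i).length + c s (U i).length t := by
        simpa using c_add s 0 (U i).length t
      have a2 : c s 0 (t + (U i).length) = c s 0 t + c s t (U i).length := by
        simpa using c_add s 0 t (U i).length
      have a3 : (U i).length + t = t + (U i).length := by omega
      have hbal2 := bal s hb j' t (U i).length
      rw [a3] at a1
      omega
    -- tiling monotonicity
    have LT : ∀ i t, c s 0 t ≤ c s (Mlen U i) t := by
      intro i
      induction i with
      | zero => intro t; simp [Mlen]
      | succ i ih =>
        intro t
        have key : c s (Mlen U i) ((U i).length + t)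
            = c s (Mlen U i) (U i).length + c s (Mlen U i + (U i).length) t :=
          c_add s (Mlen U i) (U i).length t
        have hM := Mlen_succ U i
        have hbc := blockCount s U hjoin hpre i
        have h1 := ih ((U i).length + t)
        have h2 : c s 0 ((U i).length + t) = c s 0 (U i).length + c s (U i).length t := by
          simpa using c_add s 0 (U i).length t
        have h3 := RL i t
        rw [hM]
        omega
    -- final contradiction at block k1
    set q := (U k1).length with hqdef
    have f1 := LT k1 (q + 1)
    have f7 : c s q 1 = 1 := by rw [c_one, hq]; simp
    have f2 : c s 0 (q+1) = c s 0 q + 1 := by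
      have := c_add s 0 q 1
      simpa [f7] using this
    have f3 : c s (Mlen U k1) (q+1) = c s (Mlen U k1) q + c s (Mlen U k1 + q) 1 :=
      c_add s (Mlen U k1) q 1
    have f4 : c s (Mlen U k1) q = c s 0 q := blockCount s U hjoin hpre k1
    have f5 : s (Mlen U k1 + q) = false := by
      have hM : Mlen U k1 + q = Mlen U (k1+1) := (Mlen_succ U k1).symm
      rw [hM]
      have hbl := blockLetter s U hjoin hpre (i := k1+1) (u := 0) (hlenpos (k1+1))
      have hbl' : s (Mlen U (k1+1)) = s 0 := by simpa using hbl
      rw [hbl', hs0]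
    have f6 : c s (Mlen U k1 + q) 1 = 0 := by rw [c_one, f5]; simp
    omega
end

section
/- Let s be a Sturmian word of type a beginning with a, let L be the morphism L(a)=a, L(b)=ab, and suppose s = L(t) for a Sturmian word t. For any non-empty prefix V of t with U = L(V), the word U is rich in the same letter in s as V is in t: r_s(U) = r_t(V). -/
namespace StmtAux

def win (s : ℕ → Bool) (i n : ℕ) : List Bool := (List.range n).map fun k => s (i + k)

@[simp] lemma win_length (s : ℕ → Bool) (i n : ℕ) : (win s i n).length = n := by simp [win]

lemma factor_win (s : ℕ → Bool) (i n : ℕ) : FactorOf s (win s i n) :=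
  ⟨i, by rw [win_length]; rfl⟩

lemma factor_ex {s : ℕ → Bool} {u : List Bool} (h : FactorOf s u) :
    ∃ i, u = win s i u.length := h

lemma win_add (s : ℕ → Bool) (i m n : ℕ) :
    win s i (m + n) = win s i m ++ win s (i + m) n := by
  simp [win, List.range_add, Function.comp, Nat.add_assoc]

lemma win_one (s : ℕ → Bool) (i : ℕ) : win s i 1 = [s i] := by
  simp [win, List.range_succ]

lemma prefix_eq_win {s : ℕ → Bool} {u : List Bool} (h : PrefixOf s u) :
    u = win s 0 u.length := by
  rw [h]; simp [win]

lemma prefix_factor {s : ℕ → Bool} {u : List Bool} (h : PrefixOf s u) : FactorOf s u :=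
  ⟨0, prefix_eq_win h⟩

lemma mid_factor {s : ℕ → Bool} {p u : List Bool} (hp : PrefixOf s p)
    (hpu : PrefixOf s (p ++ u)) : FactorOf s u := by
  have h1 := prefix_eq_win hp
  have h2 := prefix_eq_win hpu
  rw [List.length_append, win_add] at h2
  simp only [Nat.zero_add] at h2
  rw [← h1] at h2
  exact ⟨p.length, List.append_cancel_left h2⟩

lemma factor_take {s : ℕ → Bool} {u : List Bool} (h : FactorOf s u) (k : ℕ) :
    FactorOf s (u.take k) := by
  rcases le_or_gt u.length k with hk | hk
  · rwa [List.take_of_length_le hk]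
  obtain ⟨i, hu⟩ := factor_ex h
  have hsplit : u = win s i k ++ win s (i + k) (u.length - k) := by
    rw [← win_add]; rw [Nat.add_sub_cancel' hk.le]; exact hu
  refine ⟨i, ?_⟩
  rw [List.length_take, Nat.min_eq_left hk.le]
  conv_lhs => rw [hsplit]
  rw [List.take_left' (win_length s i k)]
  rfl

lemma factor_drop {s : ℕ → Bool} {u : List Bool} (h : FactorOf s u) (k : ℕ) :
    FactorOf s (u.drop k) := by
  rcases le_or_gt u.length k with hk | hk
  · rw [List.drop_of_length_le hk]; exact ⟨0, rfl⟩
  obtain ⟨i, hu⟩ := factor_ex h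
  have hsplit : u = win s i k ++ win s (i + k) (u.length - k) := by
    rw [← win_add]; rw [Nat.add_sub_cancel' hk.le]; exact hu
  refine ⟨i + k, ?_⟩
  rw [List.length_drop]
  conv_lhs => rw [hsplit]
  rw [List.drop_left' (win_length s i k)]
  rfl

def Lw (v : List Bool) : List Bool := (v.map Lmor).flatten

@[simp] lemma Lw_nil : Lw [] = [] := rfl

lemma Lw_cons (x : Bool) (v : List Bool) : Lw (x :: v) = Lmor x ++ Lw v := by
  simp [Lw]

lemma Lw_append (u v : List Bool) : Lw (u ++ v) = Lw u ++ Lw v := by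
  simp [Lw]

lemma Lw_length (v : List Bool) : (Lw v).length = v.length + v.count true := by
  induction v with
  | nil => rfl
  | cons x v ih =>
    cases x <;> simp [Lw_cons, Lmor, List.count_cons, ih] <;> omega

lemma Lw_count (v : List Bool) : (Lw v).count true = v.count true := by
  induction v with
  | nil => rfl
  | cons x v ih =>
    cases x <;> simp [Lw_cons, Lmor, List.count_cons, ih]

lemma count_fa (l : List Bool) : l.count false + l.count true = l.length := by
  induction l with
  | nil => rfl
  | cons x l ih => cases x <;> simp [List.count_cons, ih] <;> omega

lemma Lw_prefix {s t : ℕ → Bool} (hLt : SubstEq Lmor t s) {v : List Bool}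
    (hv : PrefixOf t v) : PrefixOf s (Lw v) := by
  have key : Lw v = ((List.range v.length).map fun i => Lmor (t i)).flatten := by
    conv_lhs => rw [Lw, hv]
    rw [List.map_map]; rfl
  rw [key]; exact hLt v.length

lemma Lw_factor {s t : ℕ → Bool} (hLt : SubstEq Lmor t s) {v : List Bool}
    (hv : FactorOf t v) : FactorOf s (Lw v) := by
  obtain ⟨i, hveq⟩ := factor_ex hv
  have key : ((List.range (i + v.length)).map fun j => Lmor (t j)).flatten
      = ((List.range i).map fun j => Lmor (t j)).flatten ++ Lw v := by
    rw [List.range_add, List.map_append, List.flatten_append, List.map_map]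
    congr 1
    conv_rhs => rw [Lw, hveq]
    simp only [win, List.map_map]
    rfl
  exact mid_factor (hLt i) (key ▸ hLt (i + v.length))

lemma bal_le {s : ℕ → Bool} (hb : BalancedW s) {u v : List Bool} (hu : FactorOf s u)
    (hv : FactorOf s v) (h : u.length = v.length) (x : Bool) :
    u.count x ≤ v.count x + 1 := by
  have := hb u v hu hv h x
  rw [abs_le] at this
  omega

lemma periodic_of_const {t : ℕ → Bool} {n : ℕ} (hn : 0 < n)
    (hc : ∀ i, (win t i n).count true = (win t 0 n).count true) :
    EventuallyPeriodic t := by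
  refine ⟨n, hn, 0, fun i _ => ?_⟩
  have h1 : win t i (n + 1) = win t i n ++ win t (i + n) 1 := win_add t i n 1
  have h2 : win t i (n + 1) = win t i 1 ++ win t (i + 1) n := by
    rw [Nat.add_comm n 1]; exact win_add t i 1 n
  have hcount : (win t i n).count true + ([t (i + n)]).count true
      = ([t i]).count true + (win t (i + 1) n).count true := by
    have := congrArg (List.count true) (h1.symm.trans h2)
    rwa [List.count_append, List.count_append, win_one, win_one] at this
  have h3 := hc i
  have h4 := hc (i + 1)
  have heq : ([t (i + n)]).count true = ([t i]).count true := by omega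
  cases hx : t (i + n) <;> cases hy : t i <;> simp [hx, hy] at heq ⊢

lemma up {s t : ℕ → Bool} (hLt : SubstEq Lmor t s) {v : List Bool}
    (hv : FactorOf t v) (hne : v ≠ []) :
    ∃ w, FactorOf s w ∧ w.length + 1 = v.length + v.count true ∧
      w.count true = v.count true := by
  refine ⟨(Lw v).drop 1, factor_drop (Lw_factor hLt hv) 1, ?_, ?_⟩
  · rw [List.length_drop, Lw_length]
    obtain ⟨b, l, rfl⟩ := List.exists_cons_of_ne_nil hne
    simp; omega
  · obtain ⟨b, l, rfl⟩ := List.exists_cons_of_ne_nil hne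
    cases b <;> simp [Lw_cons, Lmor, List.count_cons, Lw_count]

lemma down {s t : ℕ → Bool} (hLt : SubstEq Lmor t s) {v : List Bool}
    (hv : FactorOf t v) :
    ∃ w, FactorOf s w ∧ w.length = v.length + v.count true + 1 ∧
      w.count true = v.count true := by
  obtain ⟨i, hveq⟩ := factor_ex hv
  set n := v.length with hn
  have hv' : win t i (n + 1) = v ++ [t (i + n)] := by
    rw [win_add, win_one, hveq]
  set k := v.count true with hk
  refine ⟨(Lw (win t i (n + 1))).take (n + k + 1),
    factor_take (Lw_factor hLt (factor_win t i (n + 1))) _, ?_, ?_⟩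
  · rw [List.length_take, Lw_length]
    cases hc : t (i + n) <;>
      simp [hv', hc, List.count_append, List.count_cons, ← hk] <;> omega
  · rw [hv', Lw_append]
    cases hc : t (i + n)
    · have : Lw [false] = [false] := rfl
      rw [this, List.take_of_length_le (by rw [List.length_append, Lw_length]; simp only [List.length_singleton]; try omega)]
      simp [List.count_append, Lw_count, hk]
    · have h2 : Lw v ++ Lw [true] = (Lw v ++ [false]) ++ [true] := by
        simp [Lw, Lmor]
      rw [h2, List.take_left' (by rw [List.length_append, Lw_length]; simp only [List.length_singleton]; try omega)]
      simp [List.count_append, Lw_count, hk]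

end StmtAux

open StmtAux in
/-- `L` preserves richness from `t` to `s = L(t)`: `r_s(L(V)) = r_t(V)`. -/
theorem stmt_13 (s t : ℕ → Bool) (hs : Sturmian s) (ht : Sturmian t)
    (htype : ¬ FactorOf s [true, true]) (ha : s 0 = false)
    (hLt : SubstEq Lmor t s)
    (V : List Bool) (hV : PrefixOf t V) (hne : V ≠ []) :
    ∀ x : Bool, RichIn s ((V.map Lmor).flatten) x ↔ RichIn t V x := by
  intro x
  show RichIn s (Lw V) x ↔ RichIn t V x
  have hbs := hs.2
  have hbt := ht.2
  have hVfac : FactorOf t V := prefix_factor hV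
  have hUfac : FactorOf s (Lw V) := prefix_factor (Lw_prefix hLt hV)
  set n := V.length with hn
  set kV := V.count true with hkV
  have hn0 : 0 < n := List.length_pos_iff.mpr hne
  have hUlen : (Lw V).length = n + kV := Lw_length V
  have hUcnt : (Lw V).count true = kV := Lw_count V
  have key_up1 : ∀ v, FactorOf t v → v.length = n → v.count true = kV + 1 →
      ∃ w, FactorOf s w ∧ w.length = n + kV ∧ w.count true = kV + 1 := by
    intro v hvf hvl hvc
    have hne' : v ≠ [] := List.ne_nil_of_length_pos (by omega)
    obtain ⟨w, hwf, hwl, hwc⟩ := up hLt hvf hne'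
    exact ⟨w, hwf, by omega, by omega⟩
  have key_dn1 : ∀ v, FactorOf t v → v.length = n → v.count true + 1 = kV →
      ∃ w, FactorOf s w ∧ w.length = n + kV ∧ w.count true + 1 = kV := by
    intro v hvf hvl hvc
    obtain ⟨w, hwf, hwl, hwc⟩ := down hLt hvf
    exact ⟨w, hwf, by omega, by omega⟩
  have hwinlen : ∀ i : ℕ, (win t i n).length = n := fun i => win_length t i n
  have hbal_lo : ∀ i : ℕ, kV ≤ (win t i n).count true + 1 := by
    intro i
    have := bal_le hbt hVfac (factor_win t i n) (by rw [hwinlen i, hn]) true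
    omega
  have hbal_hi : ∀ i : ℕ, (win t i n).count true ≤ kV + 1 := by
    intro i
    have := bal_le hbt (factor_win t i n) hVfac (by rw [hwinlen i, hn]) true
    omega
  have rev_up : (∃ w, FactorOf s w ∧ w.length = n + kV ∧ w.count true = kV + 1) →
      ∃ v, FactorOf t v ∧ v.length = n ∧ v.count true = kV + 1 := by
    rintro ⟨w, hwf, hwl, hwc⟩
    by_contra hno
    push_neg at hno
    have hle : ∀ i : ℕ, (win t i n).count true ≤ kV := by
      intro i
      have h1 := hno (win t i n) (factor_win t i n) (hwinlen i)
      have h2 := hbal_hi i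
      omega
    by_cases hex : ∃ i : ℕ, (win t i n).count true + 1 = kV
    · obtain ⟨i, hi⟩ := hex
      obtain ⟨w', hw'f, hw'l, hw'c⟩ := key_dn1 (win t i n) (factor_win t i n) (hwinlen i) hi
      have := bal_le hbs hwf hw'f (by omega) true
      omega
    · push_neg at hex
      refine absurd (periodic_of_const hn0 fun i => ?_) ht.1
      have h1 := hle i; have h2 := hle 0
      have h3 := hex i; have h4 := hex 0
      have h5 := hbal_lo i; have h6 := hbal_lo 0
      omega
  have rev_dn : (∃ w, FactorOf s w ∧ w.length = n + kV ∧ w.count true + 1 = kV) →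
      ∃ v, FactorOf t v ∧ v.length = n ∧ v.count true + 1 = kV := by
    rintro ⟨w, hwf, hwl, hwc⟩
    by_contra hno
    push_neg at hno
    have hge : ∀ i : ℕ, kV ≤ (win t i n).count true := by
      intro i
      have h1 := hno (win t i n) (factor_win t i n) (hwinlen i)
      have h2 := hbal_lo i
      omega
    by_cases hex : ∃ i : ℕ, (win t i n).count true = kV + 1
    · obtain ⟨i, hi⟩ := hex
      obtain ⟨w', hw'f, hw'l, hw'c⟩ := key_up1 (win t i n) (factor_win t i n) (hwinlen i) hi
      have := bal_le hbs hw'f hwf (by omega) true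
      omega
    · push_neg at hex
      refine absurd (periodic_of_const hn0 fun i => ?_) ht.1
      have h1 := hge i; have h2 := hge 0
      have h3 := hex i; have h4 := hex 0
      have h5 := hbal_hi i; have h6 := hbal_hi 0
      omega
  cases x
  · -- x = false
    constructor
    · rintro ⟨w, hwf, hwl, hwc⟩
      have hwfa := count_fa w
      have hUfa := count_fa (Lw V)
      have h2 : w.count true ≤ kV + 1 := by
        have := bal_le hbs hwf hUfac (by omega) true
        omega
      obtain ⟨v, hvf, hvl, hvc⟩ := rev_up ⟨w, hwf, by omega, by omega⟩
      refine ⟨v, hvf, by omega, ?_⟩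
      have h3 := count_fa v
      have h4 := count_fa V
      omega
    · rintro ⟨v, hvf, hvl, hvc⟩
      have h1 := count_fa v
      have h2 := count_fa V
      have h3 : v.count true ≤ kV + 1 := by
        have := bal_le hbt hvf hVfac (by omega) true
        omega
      obtain ⟨w, hwf, hwl, hwc⟩ := key_up1 v hvf (by omega) (by omega)
      refine ⟨w, hwf, by omega, ?_⟩
      have h4 := count_fa w
      have h5 := count_fa (Lw V)
      omega
  · -- x = true
    constructor
    · rintro ⟨w, hwf, hwl, hwc⟩
      have h1 : kV ≤ w.count true + 1 := by
        have := bal_le hbs hUfac hwf (by omega) true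
        omega
      obtain ⟨v, hvf, hvl, hvc⟩ := rev_dn ⟨w, hwf, by omega, by omega⟩
      exact ⟨v, hvf, by omega, by omega⟩
    · rintro ⟨v, hvf, hvl, hvc⟩
      have h1 : kV ≤ v.count true + 1 := by
        have := bal_le hbt hVfac hvf (by omega) true
        omega
      obtain ⟨w, hwf, hwl, hwc⟩ := key_dn1 v hvf (by omega) (by omega)
      exact ⟨w, hwf, by omega, by omega⟩
end

section
/- Let s be a Sturmian word of type a, let R be the morphism R(a)=a, R(b)=ba, and suppose s = R(t) for a Sturmian word t. For any non-empty prefix V of t with U = R(V), one has r_s(U) = r_t(V), i.e., U is rich in s in the same letter as V is in t. -/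
set_option maxHeartbeats 1000000

namespace St14

def win (f : ℕ → Bool) (i m : ℕ) : List Bool := (List.range m).map fun k => f (i + k)

@[simp] lemma win_length (f : ℕ → Bool) (i m : ℕ) : (win f i m).length = m := by simp [win]

lemma factorOf_win (s : ℕ → Bool) (i m : ℕ) : FactorOf s (win s i m) :=
  ⟨i, by simp [win]⟩

def cnt (f : ℕ → Bool) (i m : ℕ) : ℕ := (win f i m).count true

lemma cnt_le (f : ℕ → Bool) (i m : ℕ) : cnt f i m ≤ m := by
  have := List.count_le_length (a := true) (l := win f i m)
  simpa [cnt, win] using this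

lemma count_true_add_count_false (u : List Bool) : u.count true + u.count false = u.length := by
  induction u with
  | nil => rfl
  | cons a l ih => cases a <;> simp [List.count_cons] <;> omega

@[simp] lemma cnt_zero (f : ℕ → Bool) (i : ℕ) : cnt f i 0 = 0 := by simp [cnt, win]

lemma cnt_succ (f : ℕ → Bool) (i m : ℕ) :
    cnt f i (m + 1) = cnt f i m + (if f (i + m) then 1 else 0) := by
  cases h : f (i + m) <;> simp [cnt, win, List.range_succ, h]

lemma cnt_add (f : ℕ → Bool) (i a b : ℕ) : cnt f i (a + b) = cnt f i a + cnt f (i + a) b := by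
  induction b with
  | zero => simp
  | succ b ih =>
      rw [← Nat.add_assoc, cnt_succ, ih, cnt_succ]
      simp only [Nat.add_assoc]
      
lemma exists_cnt_ne {s : ℕ → Bool} (hna : ¬ EventuallyPeriodic s) {m : ℕ} (hm : 0 < m) (k : ℕ) :
    ∃ i, cnt s i m ≠ k := by
  by_contra h
  push_neg at h
  refine hna ⟨m, hm, 0, fun i _ => ?_⟩
  have key : (if s (i + m) then 1 else 0) = (if s i then 1 else 0) := by
    have h1 := cnt_succ s i m
    have h2 := cnt_add s i 1 m
    have h3 : cnt s i 1 = (if s i then 1 else 0) := by simpa using cnt_succ s i 0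
    rw [Nat.add_comm 1 m] at h2
    rw [h i, h (i + 1)] at *
    omega
  cases hsi : s i <;> cases hsm : s (i + m) <;> simp [hsi, hsm] at key ⊢

def sig (t : ℕ → Bool) (p : ℕ) : ℕ := p + cnt t 0 p

def Jw (t : ℕ → Bool) (p : ℕ) : List Bool := ((List.range p).map fun i => Rmor (t i)).flatten

lemma Jw_succ (t : ℕ → Bool) (p : ℕ) : Jw t (p + 1) = Jw t p ++ Rmor (t p) := by
  simp [Jw, List.range_succ]

lemma sig_succ (t : ℕ → Bool) (p : ℕ) :
    sig t (p + 1) = sig t p + (if t p then 2 else 1) := by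
  have h := cnt_succ t 0 p
  simp only [Nat.zero_add] at h
  cases hp : t p <;> simp [sig, h, hp] <;> omega

lemma Jw_length (t : ℕ → Bool) (p : ℕ) : (Jw t p).length = sig t p := by
  induction p with
  | zero => simp [Jw, sig]
  | succ p ih =>
      rw [Jw_succ, sig_succ]
      cases h : t p <;> simp [Rmor, h, ih]

lemma Jw_count (t : ℕ → Bool) (p : ℕ) : (Jw t p).count true = cnt t 0 p := by
  induction p with
  | zero => simp [Jw]
  | succ p ih =>
      have h := cnt_succ t 0 p
      simp only [Nat.zero_add] at h
      rw [Jw_succ, List.count_append, ih, h]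
      cases hp : t p <;> simp [Rmor, hp]

lemma win_eq_Jw {s t : ℕ → Bool} (hRt : SubstEq Rmor t s) (p : ℕ) :
    win s 0 (sig t p) = Jw t p := by
  have h : Jw t p = (List.range (Jw t p).length).map s := hRt p
  rw [Jw_length] at h
  rw [win]
  simp only [Nat.zero_add]
  exact h.symm

lemma cnt_sig {s t : ℕ → Bool} (hRt : SubstEq Rmor t s) (p : ℕ) :
    cnt s 0 (sig t p) = cnt t 0 p := by
  rw [cnt, win_eq_Jw hRt, Jw_count]

lemma win_zero_succ (f : ℕ → Bool) (m : ℕ) : win f 0 (m + 1) = win f 0 m ++ [f m] := by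
  simp [win, List.range_succ]

lemma second_false {s t : ℕ → Bool} (hRt : SubstEq Rmor t s) (p : ℕ) (hp : t p = true) :
    s (sig t p + 1) = false := by
  have h1 : win s 0 (sig t (p + 1)) = Jw t p ++ [true, false] := by
    rw [win_eq_Jw hRt, Jw_succ]
    simp [Rmor, hp]
  have h2 : sig t (p + 1) = sig t p + 2 := by rw [sig_succ]; simp [hp]
  rw [h2, show sig t p + 2 = (sig t p + 1) + 1 from rfl, win_zero_succ, win_zero_succ,
    List.append_assoc] at h1
  have h3 := List.append_inj h1 (by rw [win_length, Jw_length])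
  have h4 : ([s (sig t p)] ++ [s (sig t p + 1)] : List Bool) = [true, false] := h3.2
  simp at h4
  exact h4.2

lemma boundary {s t : ℕ → Bool} (hRt : SubstEq Rmor t s) (j : ℕ) :
    ∃ p, j ≤ sig t p ∧ sig t p ≤ j + 1 ∧ cnt s 0 (sig t p) = cnt s 0 j ∧
      ∀ q, j ≤ sig t q → p ≤ q := by
  classical
  have hex : ∃ p, j ≤ sig t p := ⟨j, Nat.le_add_right j _⟩
  refine ⟨Nat.find hex, Nat.find_spec hex, ?_, ?_, fun q hq => Nat.find_min' hex hq⟩ <;>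
  · rcases hp0 : Nat.find hex with _ | r
    · have h0 : j ≤ sig t 0 := by rw [← hp0]; exact Nat.find_spec hex
      have : sig t 0 = 0 := by simp [sig]
      first
        | omega
        | (have hj : j = 0 := by omega
           subst hj; rw [this])
    · have hr : ¬ j ≤ sig t r := Nat.find_min hex (by omega)
      have hsp : j ≤ sig t (r + 1) := by rw [← hp0]; exact Nat.find_spec hex
      have hstep : sig t (r + 1) = sig t r + (if t r then 2 else 1) := sig_succ t r
      first
        | (cases h : t r <;> simp [h] at hstep <;> omega)
        | (rcases Nat.lt_or_ge (sig t (r + 1)) (j + 1) with hlt | hge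
           · have : sig t (r + 1) = j := by
               cases h : t r <;> simp [h] at hstep <;> omega
             rw [this]
           · -- sig t (r+1) = j + 1
             have hub : sig t (r + 1) ≤ j + 1 := by
               cases h : t r <;> simp [h] at hstep <;> omega
             have heq : sig t (r + 1) = j + 1 := le_antisymm hub hge
             have htr : t r = true := by
               by_contra hf
               simp [Bool.not_eq_true] at hf
               simp [hf] at hstep
               omega
             have hsigr : sig t r = j - 1 ∧ j = sig t r + 1 := by
               simp [htr] at hstep
               omega
             have hsj : s j = false := by
               rw [hsigr.2]
               exact second_false hRt r htr
             rw [heq]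
             have := cnt_succ s 0 j
             simp only [Nat.zero_add] at this
             rw [this, hsj]
             simp)

lemma window_cnt {s t : ℕ → Bool} (hRt : SubstEq Rmor t s) (j m : ℕ) :
    ∃ p q, p ≤ q ∧ j ≤ sig t p ∧ sig t p ≤ j + 1 ∧ j + m ≤ sig t q ∧ sig t q ≤ j + m + 1 ∧
      cnt s j m = cnt t p (q - p) ∧ sig t q - sig t p = (q - p) + cnt t p (q - p) := by
  obtain ⟨p, hp1, hp2, hp3, hpmin⟩ := boundary hRt j
  obtain ⟨q, hq1, hq2, hq3, _⟩ := boundary hRt (j + m)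
  have hpq : p ≤ q := hpmin q (le_trans (Nat.le_add_right j m) hq1)
  have e1 : cnt s 0 (j + m) = cnt s 0 j + cnt s j m := by
    have := cnt_add s 0 j m
    simpa using this
  have e2 : cnt t 0 q = cnt t 0 p + cnt t p (q - p) := by
    have := cnt_add t 0 p (q - p)
    rw [Nat.add_sub_cancel' hpq] at this
    simpa using this
  have e3 := cnt_sig hRt p
  have e4 := cnt_sig hRt q
  have e5 : sig t p = p + cnt t 0 p := rfl
  have e6 : sig t q = q + cnt t 0 q := rfl
  exact ⟨p, q, hpq, hp1, hp2, hq1, hq2, by omega, by omega⟩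

lemma pull_lt {s t : ℕ → Bool} (hRt : SubstEq Rmor t s) {n k : ℕ} (j : ℕ)
    (h : cnt s j (n + k) < k) : ∃ i, cnt t i n < k := by
  obtain ⟨p, q, hpq, hp1, hp2, hq1, hq2, hc, hsig⟩ := window_cnt hRt j (n + k)
  have hqp : n ≤ q - p := by omega
  refine ⟨p, ?_⟩
  have hadd : cnt t p (q - p) = cnt t p n + cnt t (p + n) (q - p - n) := by
    have := cnt_add t p n (q - p - n)
    rw [Nat.add_sub_cancel' hqp] at this
    exact this
  omega

lemma pull_gt {s t : ℕ → Bool} (hRt : SubstEq Rmor t s) {n k : ℕ} (j : ℕ)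
    (h : k < cnt s j (n + k)) : ∃ i, k < cnt t i n := by
  obtain ⟨p, q, hpq, hp1, hp2, hq1, hq2, hc, hsig⟩ := window_cnt hRt j (n + k)
  have hqp : q - p ≤ n := by omega
  refine ⟨p, ?_⟩
  have hadd : cnt t p n = cnt t p (q - p) + cnt t (p + (q - p)) (n - (q - p)) := by
    have := cnt_add t p (q - p) (n - (q - p))
    rw [Nat.add_sub_cancel' hqp] at this
    exact this
  omega

lemma rich_true_iff {s : ℕ → Bool} {u : List Bool} :
    RichIn s u true ↔ ∃ j, cnt s j u.length < u.count true := by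
  constructor
  · rintro ⟨v, ⟨i, hv⟩, hlen, hcnt⟩
    refine ⟨i, ?_⟩
    have hvw : v = win s i u.length := by rw [← hlen]; exact hv
    have h3 : v.count true = cnt s i u.length := by rw [hvw]; rfl
    omega
  · rintro ⟨j, hj⟩
    exact ⟨win s j u.length, factorOf_win s j u.length, win_length s j u.length, hj⟩

lemma rich_false_iff {s : ℕ → Bool} {u : List Bool} :
    RichIn s u false ↔ ∃ j, u.count true < cnt s j u.length := by
  constructor
  · rintro ⟨v, ⟨i, hv⟩, hlen, hcnt⟩
    refine ⟨i, ?_⟩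
    have hvw : v = win s i u.length := by rw [← hlen]; exact hv
    have h1 := count_true_add_count_false u
    have h2 := count_true_add_count_false v
    have h3 : v.count true = cnt s i u.length := by rw [hvw]; rfl
    omega
  · rintro ⟨j, hj⟩
    refine ⟨win s j u.length, factorOf_win s j u.length, win_length s j u.length, ?_⟩
    have h1 := count_true_add_count_false u
    have h2 := count_true_add_count_false (win s j u.length)
    have h3 : (win s j u.length).count true = cnt s j u.length := rfl
    have h4 := win_length s j u.length
    omega

lemma bal_cnt {s : ℕ → Bool} (hb : BalancedW s) (i j m : ℕ) :
    |(cnt s i m : ℤ) - (cnt s j m : ℤ)| ≤ 1 := by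
  have := hb (win s i m) (win s j m) (factorOf_win s i m) (factorOf_win s j m)
    (by simp) true
  simpa [cnt] using this

end St14

/-- `R` preserves richness from `t` to `s = R(t)`: `r_s(R(V)) = r_t(V)`. -/
theorem stmt_14 (s t : ℕ → Bool) (hs : Sturmian s) (ht : Sturmian t)
    (htype : ¬ FactorOf s [true, true])
    (hRt : SubstEq Rmor t s)
    (V : List Bool) (hV : PrefixOf t V) (hne : V ≠ []) :
    ∀ x : Bool, RichIn s ((V.map Rmor).flatten) x ↔ RichIn t V x := by
  classical
  obtain ⟨hna_s, hbal_s⟩ := hs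
  obtain ⟨hna_t, hbal_t⟩ := ht
  set n := V.length with hn
  set k := St14.cnt t 0 n with hk
  have hV' : V = St14.win t 0 n := by
    rw [hV]; simp [St14.win]; rfl
  have hn0 : 0 < n := by
    rw [hn]
    exact List.length_pos_iff.mpr hne
  have hVc : V.count true = k := by rw [hk, St14.cnt, ← hV']
  have hU : (V.map Rmor).flatten = St14.Jw t n := by
    rw [hV, List.map_map]; rfl
  have hUlen : ((V.map Rmor).flatten).length = n + k := by
    rw [hU, St14.Jw_length]; rfl
  have hUc : ((V.map Rmor).flatten).count true = k := by rw [hU, St14.Jw_count]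
  have hkn : k ≤ n := St14.cnt_le t 0 n
  have hA : RichIn s ((V.map Rmor).flatten) true → RichIn t V true := by
    intro h
    rw [St14.rich_true_iff] at h ⊢
    rw [hUlen, hUc] at h
    obtain ⟨j, hj⟩ := h
    obtain ⟨i, hi⟩ := St14.pull_lt hRt j hj
    exact ⟨i, by rw [← hn, hVc] at *; exact hi⟩
  have hB : RichIn s ((V.map Rmor).flatten) false → RichIn t V false := by
    intro h
    rw [St14.rich_false_iff] at h ⊢
    rw [hUlen, hUc] at h
    obtain ⟨j, hj⟩ := h
    obtain ⟨i, hi⟩ := St14.pull_gt hRt j hj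
    exact ⟨i, by rw [← hn, hVc] at *; exact hi⟩
  have hor : RichIn s ((V.map Rmor).flatten) true ∨ RichIn s ((V.map Rmor).flatten) false := by
    obtain ⟨j, hj⟩ := St14.exists_cnt_ne hna_s (show 0 < n + k by omega) k
    rcases Nat.lt_or_ge (St14.cnt s j (n + k)) k with h | h
    · left; rw [St14.rich_true_iff, hUlen, hUc]; exact ⟨j, h⟩
    · right; rw [St14.rich_false_iff, hUlen, hUc]
      exact ⟨j, lt_of_le_of_ne h (Ne.symm hj)⟩
  have hnb : ¬ (RichIn t V true ∧ RichIn t V false) := by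
    rintro ⟨h1, h2⟩
    rw [St14.rich_true_iff] at h1
    rw [St14.rich_false_iff] at h2
    obtain ⟨j1, hj1⟩ := h1
    obtain ⟨j2, hj2⟩ := h2
    have hb := St14.bal_cnt hbal_t j1 j2 V.length
    rw [abs_le] at hb
    rw [hVc] at hj1 hj2
    omega
  intro x
  cases x
  · constructor
    · exact hB
    · intro h
      rcases hor with h1 | h2
      · exact absurd ⟨hA h1, h⟩ hnb
      · exact h2
  · constructor
    · exact hA
    · intro h
      rcases hor with h1 | h2
      · exact h1
      · exact absurd ⟨h, hB h2⟩ hnb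
end

section
/- Let s be a Sturmian word admitting a factorization s = U_1 U_2 ⋯ into non-empty prefixes U_i of s, all rich in the same letter. Then there exists a Sturmian word t with a factorization t = V_1 V_2 ⋯ into non-empty prefixes of t, all rich in the same letter, and with |V_1| < |U_1|. -/
namespace StAux

/-- the factor of `s` of length `n` starting at position `i`. -/
def slice (s : ℕ → Bool) (i n : ℕ) : List Bool :=
  (List.range n).map fun k => s (i + k)

@[simp] lemma length_slice (s : ℕ → Bool) (i n : ℕ) : (slice s i n).length = n := by
  simp [slice]

@[simp] lemma slice_zero (s : ℕ → Bool) (i : ℕ) : slice s i 0 = [] := by simp [slice]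

lemma slice_succ (s : ℕ → Bool) (i n : ℕ) :
    slice s i (n + 1) = slice s i n ++ [s (i + n)] := by
  simp [slice, List.range_succ]

lemma slice_one (s : ℕ → Bool) (i : ℕ) : slice s i 1 = [s i] := by
  simp [slice, List.range_succ]

lemma slice_add (s : ℕ → Bool) (i m n : ℕ) :
    slice s i (m + n) = slice s i m ++ slice s (i + m) n := by
  induction n with
  | zero => simp
  | succ n ih =>
      rw [← Nat.add_assoc, slice_succ, ih, slice_succ, List.append_assoc, Nat.add_assoc,
        Nat.add_comm m n]

lemma getElem_slice (s : ℕ → Bool) (i n k : ℕ) (h : k < n) :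
    (slice s i n)[k]'(by simpa using h) = s (i + k) := by
  simp [slice]

lemma slice_congr {s s' : ℕ → Bool} {i j n : ℕ} (h : slice s i n = slice s' j n) :
    ∀ k < n, s (i + k) = s' (j + k) := by
  intro k hk
  have := congrArg (fun l => l.getD k false) h
  simpa [slice, List.getD_eq_getElem?_getD, hk] using this

lemma slice_ext {s s' : ℕ → Bool} {i j n : ℕ} (h : ∀ k < n, s (i + k) = s' (j + k)) :
    slice s i n = slice s' j n := by
  apply List.ext_getElem (by simp)
  intro k h1 h2
  simp only [length_slice] at h1
  rw [getElem_slice _ _ _ _ h1, getElem_slice _ _ _ _ h1]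
  exact h _ h1

lemma factorOf_slice (s : ℕ → Bool) (i n : ℕ) : FactorOf s (slice s i n) := by
  exact ⟨i, by simp [slice]⟩

lemma factorOf_iff {s : ℕ → Bool} {u : List Bool} :
    FactorOf s u ↔ ∃ i, u = slice s i u.length := Iff.rfl

lemma prefixOf_iff {s : ℕ → Bool} {u : List Bool} :
    PrefixOf s u ↔ u = slice s 0 u.length := by
  unfold PrefixOf slice
  simp

lemma prefixOf_slice (s : ℕ → Bool) (n : ℕ) : PrefixOf s (slice s 0 n) := by
  rw [prefixOf_iff]; simp

lemma count_slice_mono (s : ℕ → Bool) (i : ℕ) {a b : ℕ} (h : a ≤ b) (x : Bool) :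
    (slice s i a).count x ≤ (slice s i b).count x := by
  obtain ⟨c, rfl⟩ := Nat.le.dest h
  rw [slice_add, List.count_append]
  omega

lemma count_false_add_count_true (u : List Bool) :
    u.count false + u.count true = u.length := by
  induction u with
  | nil => simp
  | cons a l ih => cases a <;> simp [List.count_cons] <;> omega

/-- balance, specialized to slices -/
lemma bal {s : ℕ → Bool} (hb : BalancedW s) (i j n : ℕ) (x : Bool) :
    ((slice s i n).count x : ℤ) - ((slice s j n).count x : ℤ) ≤ 1 ∧
    ((slice s j n).count x : ℤ) - ((slice s i n).count x : ℤ) ≤ 1 := by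
  have := hb (slice s i n) (slice s j n) (factorOf_slice s i n) (factorOf_slice s j n)
    (by simp) x
  rw [abs_le] at this
  exact ⟨this.2, by omega⟩

end StAux

namespace StAux

lemma take_slice (s : ℕ → Bool) (i n m : ℕ) (h : m ≤ n) :
    (slice s i n).take m = slice s i m := by
  obtain ⟨c, rfl⟩ := Nat.le.dest h
  rw [slice_add, List.take_append_of_le_length (by simp), List.take_of_length_le (by simp)]

lemma drop_slice (s : ℕ → Bool) (i n m : ℕ) (h : m ≤ n) :
    (slice s i n).drop m = slice s (i + m) (n - m) := by
  obtain ⟨c, rfl⟩ := Nat.le.dest h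
  rw [slice_add]
  simp [List.drop_append_of_le_length]

lemma factorOf_take {s : ℕ → Bool} {u : List Bool} (h : FactorOf s u) (m : ℕ) :
    FactorOf s (u.take m) := by
  obtain ⟨i, hi⟩ := h
  have hu : u = slice s i u.length := hi
  rcases Nat.le_total m u.length with hm | hm
  · rw [hu, take_slice _ _ _ _ hm]
    exact factorOf_slice s i m
  · rw [List.take_of_length_le hm]
    exact ⟨i, hi⟩

lemma factorOf_drop {s : ℕ → Bool} {u : List Bool} (h : FactorOf s u) (m : ℕ) :
    FactorOf s (u.drop m) := by
  obtain ⟨i, hi⟩ := h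
  have hu : u = slice s i u.length := hi
  rcases Nat.le_total m u.length with hm | hm
  · rw [hu, drop_slice _ _ _ _ hm]
    exact factorOf_slice s (i+m) _
  · rw [List.drop_of_length_le hm]
    exact ⟨0, rfl⟩

lemma factorOf_infix {s : ℕ → Bool} {u v : List Bool} (h : FactorOf s u) (hinf : v <:+: u) :
    FactorOf s v := by
  obtain ⟨l, r, rfl⟩ := hinf
  have := factorOf_take (factorOf_drop h l.length) v.length
  rwa [List.append_assoc, List.drop_left, List.take_left] at this

/-- every length-n factor has z-count at most that of a z-rich factor -/
lemma tv {s : ℕ → Bool} (hb : BalancedW s) {u : List Bool} {z : Bool}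
    (hu : FactorOf s u) (hr : RichIn s u z) {w : List Bool} (hw : FactorOf s w)
    (hlen : w.length = u.length) : w.count z ≤ u.count z := by
  obtain ⟨v, hv, hvlen, hvcnt⟩ := hr
  have h1 := hb u v hu hv hvlen.symm z
  have h2 := hb w v hw hv (by omega) z
  rw [abs_le] at h1 h2
  omega

/-- rich witness can be taken with count exactly one less -/
lemma rich_witness {s : ℕ → Bool} (hb : BalancedW s) {u : List Bool} {z : Bool}
    (hu : FactorOf s u) (hr : RichIn s u z) :
    1 ≤ u.count z ∧ ∃ j, (slice s j u.length).count z + 1 = u.count z := by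
  obtain ⟨v, hv, hvlen, hvcnt⟩ := hr
  have h1 := hb u v hu hv hvlen.symm z
  rw [abs_le] at h1
  obtain ⟨j, hj⟩ := hv
  refine ⟨by omega, j, ?_⟩
  rw [hvlen] at hj
  rw [show slice s j u.length = v from hj.symm]
  omega

/-- in an aperiodic word, every nonempty factor is rich in some letter -/
lemma rich_dichotomy {t : ℕ → Bool} (hap : ¬ EventuallyPeriodic t) {u : List Bool}
    (hu : FactorOf t u) (hne : u ≠ []) : RichIn t u false ∨ RichIn t u true := by
  set m := u.length with hm
  have hm1 : 0 < m := List.length_pos_iff.mpr hne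
  have : ¬ (∀ n ≥ 0, t (n + m) = t n) := fun h => hap ⟨m, hm1, 0, h⟩
  push_neg at this
  obtain ⟨n, -, hn⟩ := this
  have hsplit : slice t n m ++ [t (n + m)] = [t n] ++ slice t (n+1) m := by
    rw [← slice_succ, ← slice_one t n, ← slice_add]
    congr 1
    omega
  -- counts of the two adjacent windows differ (at letter `true`)
  have hdiff : (slice t n m).count true ≠ (slice t (n+1) m).count true := by
    have key := congrArg (List.count true) hsplit
    cases h1 : t n <;> cases h2 : t (n + m) <;>
      rw [h1, h2] at key hn <;>
      simp [List.count_append, List.count_cons] at key hn ⊢ <;> omega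
  rcases Nat.lt_or_ge ((slice t n m).count true) ((slice t (n+1) m).count true) with h | h
  · -- window n is lighter, window n+1 heavier
    rcases Nat.lt_or_ge (u.count true) ((slice t (n+1) m).count true) with h2 | h2
    · left
      refine ⟨slice t (n+1) m, factorOf_slice _ _ _, by simp [hm], ?_⟩
      have e1 := count_false_add_count_true u
      have e2 := count_false_add_count_true (slice t (n+1) m)
      rw [length_slice] at e2
      omega
    · right
      exact ⟨slice t n m, factorOf_slice _ _ _, by simp [hm], by omega⟩
  · rcases Nat.lt_or_ge (u.count true) ((slice t n m).count true) with h2 | h2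
    · left
      refine ⟨slice t n m, factorOf_slice _ _ _, by simp [hm], ?_⟩
      have e1 := count_false_add_count_true u
      have e2 := count_false_add_count_true (slice t n m)
      rw [length_slice] at e2
      omega
    · right
      exact ⟨slice t (n+1) m, factorOf_slice _ _ _, by simp [hm], by omega⟩

end StAux

namespace StAux

lemma first_diff {α : Type*} : ∀ (m m' : List α), m.length = m'.length → m ≠ m' →
    ∃ (P : List α) (x y : α) (Q Q' : List α),
      m = P ++ x :: Q ∧ m' = P ++ y :: Q' ∧ x ≠ y ∧ Q.length = Q'.length := by
  intro m
  induction m with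
  | nil =>
      intro m' hl hne
      cases m' with
      | nil => exact absurd rfl hne
      | cons a l => simp at hl
  | cons a l ih =>
      intro m' hl hne
      cases m' with
      | nil => simp at hl
      | cons b l' =>
          by_cases hab : a = b
          · subst hab
            have hll : l ≠ l' := by rintro rfl; exact hne rfl
            obtain ⟨P, x, y, Q, Q', h1, h2, h3, h4⟩ := ih l' (by simpa using hl) hll
            exact ⟨a :: P, x, y, Q, Q', by simp [h1], by simp [h2], h3, h4⟩
          · exact ⟨[], a, b, l, l', by simp, by simp, hab, by simpa using hl⟩

/-- From an unbalanced pair of factors one gets `b w b` and `a w a` both factors. -/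
lemma awa_bwb {t : ℕ → Bool} :
    ∀ (n : ℕ) (u v : List Bool), u.length = n → FactorOf t u → FactorOf t v →
    u.length = v.length → v.count true + 2 ≤ u.count true →
    ∃ w, FactorOf t (true :: (w ++ [true])) ∧ FactorOf t (false :: (w ++ [false])) := by
  intro n
  induction n using Nat.strong_induction_on with
  | _ n IH =>
  intro u v hn hu hv hlen hcnt
  -- u is nonempty, v is nonempty
  have h2 : 2 ≤ u.length := by
    have hcl : u.count true ≤ u.length := List.count_le_length
    omega
  cases u with
  | nil => simp at h2
  | cons u0 u' =>
  cases v with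
  | nil => simp at hlen
  | cons v0 v' =>
  have hu' : FactorOf t u' := by
    have := factorOf_drop hu 1
    simpa using this
  have hv' : FactorOf t v' := by
    have := factorOf_drop hv 1
    simpa using this
  by_cases h00 : u0 = v0
  · -- strip equal heads
    subst h00
    refine IH u'.length (by simp at hn; omega) u' v' rfl hu' hv' (by simpa using hlen) ?_
    cases u0 <;> simp [List.count_cons] at hcnt ⊢ <;> omega
  · cases hu0 : u0 <;> cases hv0 : v0 <;> rw [hu0, hv0] at h00 <;> try simp at h00
    · -- u0 = false, v0 = true : strip heads, difference grows
      subst hu0; subst hv0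
      refine IH u'.length (by simp at hn; omega) u' v' rfl hu' hv' (by simpa using hlen) ?_
      simp [List.count_cons] at hcnt ⊢; omega
    · -- u0 = true, v0 = false : look at last letters
      subst hu0; subst hv0
      -- u' and v' are nonempty
      have hu'ne : u' ≠ [] := by
        intro h; subst h; simp at h2
      have hv'ne : v' ≠ [] := by
        intro h; subst h; simp at hlen
        exact hu'ne hlen
      obtain ⟨m, ul, rfl⟩ := (List.eq_nil_or_concat u').resolve_left hu'ne
      obtain ⟨m', vl, rfl⟩ := (List.eq_nil_or_concat v').resolve_left hv'ne
      have hmm' : m.length = m'.length := by simp at hlen; omega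
      by_cases hll : ul = vl
      · -- strip equal last letters
        subst hll
        refine IH (true :: m).length (by simp at hn ⊢; omega) (true :: m) (false :: m') rfl
          ?_ ?_ (by simp [hmm']) ?_
        · exact factorOf_infix hu ⟨[], [ul], by simp⟩
        · exact factorOf_infix hv ⟨[], [ul], by simp⟩
        · cases ul <;> simp [List.count_cons, List.count_append] at hcnt ⊢ <;> omega
      · cases hul : ul <;> cases hvl : vl <;> rw [hul, hvl] at hll <;> try simp at hll
        · -- ul = false, vl = true : strip both ends
          subst hul; subst hvl
          refine IH m.length (by simp at hn; omega) m m' rfl ?_ ?_ hmm' ?_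
          · exact factorOf_infix hu ⟨[true], [false], by simp⟩
          · exact factorOf_infix hv ⟨[false], [true], by simp⟩
          · simp [List.count_cons, List.count_append] at hcnt; omega
        · -- ul = true, vl = false : core case  u = true::m++[true], v = false::m'++[false]
          subst hul; subst hvl
          by_cases hmeq : m = m'
          · subst hmeq
            exact ⟨m, by simpa using hu, by simpa using hv⟩
          · obtain ⟨P, x, y, Q, Q', hP1, hP2, hxy, hQQ⟩ := first_diff m m' hmm' hmeq
            cases hx : x <;> cases hy : y <;> rw [hx, hy] at hxy <;> try simp at hxy
            · -- x = false, y = true : pass to the suffix pair (Q ++ [true], Q' ++ [false])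
              subst hx; subst hy
              refine IH (Q ++ [true]).length (by subst hP1; simp at hn; simp; omega)
                (Q ++ [true]) (Q' ++ [false]) rfl ?_ ?_ (by simp [hQQ]) ?_
              · refine factorOf_infix hu ⟨true :: P ++ [false], [], ?_⟩
                subst hP1; simp
              · refine factorOf_infix hv ⟨false :: P ++ [true], [], ?_⟩
                subst hP2; simp
              · subst hP1; subst hP2
                simp [List.count_cons, List.count_append] at hcnt ⊢
                omega
            · -- x = true, y = false : w := P works directly
              subst hx; subst hy
              refine ⟨P, ?_, ?_⟩
              · refine factorOf_infix hu ⟨[], Q ++ [true], ?_⟩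
                subst hP1; simp
              · refine factorOf_infix hv ⟨[], Q' ++ [false], ?_⟩
                subst hP2; simp

end StAux

namespace StAux

/-- next block boundary -/
def nxt (s : ℕ → Bool) (p : ℕ) : ℕ := if s (p + 1) = true then p + 2 else p + 1

/-- boundaries of the `L`-blocks -/
def bnd (s : ℕ → Bool) : ℕ → ℕ
  | 0 => 0
  | k + 1 => nxt s (bnd s k)

/-- the derived (desubstituted) word -/
def der (s : ℕ → Bool) (k : ℕ) : Bool := s (bnd s k + 1)

/-- the image of a finite word under `Lmor` -/
def Ljoin (w : List Bool) : List Bool := (w.map Lmor).flatten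

@[simp] lemma Ljoin_nil : Ljoin [] = [] := rfl

lemma Ljoin_cons (x : Bool) (w : List Bool) : Ljoin (x :: w) = Lmor x ++ Ljoin w := by
  simp [Ljoin]

lemma Ljoin_append (w1 w2 : List Bool) : Ljoin (w1 ++ w2) = Ljoin w1 ++ Ljoin w2 := by
  simp [Ljoin]

lemma length_Ljoin (w : List Bool) : (Ljoin w).length = w.length + w.count true := by
  induction w with
  | nil => simp
  | cons x w ih =>
      cases x <;> simp [Ljoin_cons, Lmor, List.count_cons, ih] <;> omega

lemma count_true_Ljoin (w : List Bool) : (Ljoin w).count true = w.count true := by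
  induction w with
  | nil => simp
  | cons x w ih =>
      cases x <;> simp [Ljoin_cons, Lmor, List.count_cons, List.count_append, ih]

lemma Ljoin_head (w : List Bool) : Ljoin w = [] ∨ ∃ r, Ljoin w = false :: r := by
  cases w with
  | nil => exact Or.inl rfl
  | cons x w =>
      right
      cases x
      · exact ⟨Ljoin w, by simp [Ljoin_cons, Lmor]⟩
      · exact ⟨true :: Ljoin w, by simp [Ljoin_cons, Lmor]⟩

lemma slice_split0 (s : ℕ → Bool) (a b : ℕ) (h : a ≤ b) :
    slice s 0 b = slice s 0 a ++ slice s a (b - a) := by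
  conv_lhs => rw [show b = a + (b - a) from by omega]
  rw [slice_add]
  simp

lemma Ljoin_inj : ∀ {w1 w2 : List Bool}, Ljoin w1 = Ljoin w2 → w1 = w2 := by
  intro w1
  induction w1 with
  | nil =>
      intro w2 h
      cases w2 with
      | nil => rfl
      | cons y w2 =>
          exfalso
          cases y <;> simp [Ljoin_cons, Lmor] at h
  | cons x w1 ih =>
      intro w2 h
      cases w2 with
      | nil =>
          exfalso
          cases x <;> simp [Ljoin_cons, Lmor] at h
      | cons y w2 =>
          cases x <;> cases y <;> simp [Ljoin_cons, Lmor] at h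
          · rw [ih h]
          · exfalso
            rcases Ljoin_head w1 with h1 | ⟨r, h1⟩ <;> rw [h1] at h <;> simp at h
          · exfalso
            rcases Ljoin_head w2 with h1 | ⟨r, h1⟩ <;> rw [h1] at h <;> simp at h
          · rw [ih h]

section Der

variable {s : ℕ → Bool} (h0 : s 0 = false) (hbb : ∀ n, s n = true → s (n + 1) = false)

include h0 hbb

lemma bnd_letter : ∀ k, s (bnd s k) = false := by
  intro k
  induction k with
  | zero => exact h0
  | succ k ih =>
      show s (nxt s (bnd s k)) = false
      unfold nxt
      by_cases h : s (bnd s k + 1) = true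
      · rw [if_pos h]
        exact hbb _ h
      · rw [if_neg h]
        simpa using h

omit h0 hbb in
lemma bnd_succ_ge (k : ℕ) : bnd s k + 1 ≤ bnd s (k + 1) := by
  show bnd s k + 1 ≤ nxt s (bnd s k)
  unfold nxt
  split <;> omega

omit h0 hbb in
lemma bnd_strictMono : StrictMono (bnd s) :=
  strictMono_nat_of_lt_succ fun k => by have := bnd_succ_ge (s := s) k; omega

omit h0 hbb in
lemma bnd_le_two (k : ℕ) : bnd s (k + 1) ≤ bnd s k + 2 := by
  show nxt s (bnd s k) ≤ bnd s k + 2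
  unfold nxt
  split <;> omega

omit h0 hbb in
lemma le_bnd (k : ℕ) : k ≤ bnd s k := by
  induction k with
  | zero => exact Nat.zero_le _
  | succ k ih => have := bnd_succ_ge (s := s) k; omega

/-- block `k` of `s` is the `Lmor`-image of letter `der s k` -/
lemma block_eq (k : ℕ) :
    slice s (bnd s k) (bnd s (k + 1) - bnd s k) = Lmor (der s k) := by
  have hb := bnd_letter h0 hbb k
  show slice s (bnd s k) (nxt s (bnd s k) - bnd s k) = Lmor (s (bnd s k + 1))
  unfold nxt
  by_cases h : s (bnd s k + 1) = true
  · rw [if_pos h, h, show ∀ p:ℕ, p + 2 - p = 2 from fun p => by omega]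
    show slice s (bnd s k) (1 + 1) = _
    rw [slice_add, slice_one, slice_one, h, hb]
    simp [Lmor]
  · rw [if_neg h, show ∀ p:ℕ, p + 1 - p = 1 from fun p => by omega, slice_one, hb]
    simp at h
    rw [h]
    simp [Lmor]

/-- fundamental correspondence: prefixes of `s` at boundaries are `L`-images of prefixes
of the derived word -/
lemma corr : ∀ k, Ljoin (slice (der s) 0 k) = slice s 0 (bnd s k) := by
  intro k
  induction k with
  | zero => simp [bnd]
  | succ k ih =>
      have hle : bnd s k ≤ bnd s (k + 1) := (bnd_strictMono (s := s)).le_iff_le.mpr (by omega)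
      rw [slice_succ, Ljoin_append, ih,
        show bnd s (k+1) = bnd s k + (bnd s (k+1) - bnd s k) from by omega, slice_add]
      congr 1
      rw [show (0:ℕ) + k = k from by omega]
      show Ljoin [der s k] = _
      rw [show Ljoin [der s k] = Lmor (der s k) from by simp [Ljoin],
        ← block_eq h0 hbb k]
      congr 1
      omega

lemma corr_win (k1 d : ℕ) :
    Ljoin (slice (der s) k1 d) = slice s (bnd s k1) (bnd s (k1 + d) - bnd s k1) := by
  have hle : bnd s k1 ≤ bnd s (k1 + d) := (bnd_strictMono (s := s)).le_iff_le.mpr (by omega)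
  have h1 : slice (der s) 0 (k1 + d) = slice (der s) 0 k1 ++ slice (der s) k1 d := by
    have := slice_split0 (der s) k1 (k1 + d) (by omega)
    rwa [show k1 + d - k1 = d from by omega] at this
  have h2 := corr h0 hbb (k1 + d)
  rw [h1, Ljoin_append, corr h0 hbb k1] at h2
  have h3 : slice s 0 (bnd s (k1 + d)) =
      slice s 0 (bnd s k1) ++ slice s (bnd s k1) (bnd s (k1 + d) - bnd s k1) :=
    slice_split0 s _ _ hle
  rw [h3] at h2
  exact (List.append_cancel_left h2)

/-- positions carrying `false` are exactly the boundaries -/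
lemma bnd_between (p : ℕ) : ∃ k, bnd s k ≤ p ∧ p < bnd s (k + 1) := by
  induction p with
  | zero =>
      refine ⟨0, le_of_eq rfl, ?_⟩
      have := bnd_succ_ge (s := s) 0
      have h00 : bnd s 0 = 0 := rfl
      omega
  | succ p ih =>
      obtain ⟨k, h1, h2⟩ := ih
      by_cases h : p + 1 < bnd s (k + 1)
      · exact ⟨k, by omega, h⟩
      · refine ⟨k + 1, by omega, ?_⟩
        have := bnd_succ_ge (s := s) (k + 1)
        have := bnd_succ_ge (s := s) k
        omega

lemma bnd_surj (p : ℕ) (hp : s p = false) : ∃ k, bnd s k = p := by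
  obtain ⟨k, h1, h2⟩ := bnd_between h0 hbb p
  refine ⟨k, ?_⟩
  rcases Nat.eq_or_lt_of_le h1 with h | h
  · omega
  · -- then p = bnd k + 1 and block has length 2, so s p = true, contradiction
    exfalso
    have hb2 := bnd_le_two (s := s) k
    have hp' : p = bnd s k + 1 := by omega
    have hk2 : bnd s (k + 1) = bnd s k + 2 := by omega
    have hdef : bnd s (k + 1) = nxt s (bnd s k) := rfl
    by_cases hc : s (bnd s k + 1) = true
    · have : s p = true := by rw [hp']; exact hc
      rw [hp] at this
      simp at this
    · have : nxt s (bnd s k) = bnd s k + 1 := by unfold nxt; rw [if_neg hc]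
      omega

lemma der_factor (π M : ℕ) :
    FactorOf s (Ljoin (slice (der s) π M) ++ [false]) := by
  have h1 := corr_win h0 hbb π M
  have hle : bnd s π ≤ bnd s (π + M) := (bnd_strictMono (s := s)).le_iff_le.mpr (by omega)
  have h2 : Ljoin (slice (der s) π M) ++ [false] =
      slice s (bnd s π) ((bnd s (π + M) - bnd s π) + 1) := by
    rw [slice_succ, h1,
      show bnd s π + (bnd s (π + M) - bnd s π) = bnd s (π + M) from by omega,
      bnd_letter h0 hbb]
  rw [h2]
  exact factorOf_slice _ _ _

end Der

end StAux

namespace StAux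

section Der2

variable {s : ℕ → Bool} (h0 : s 0 = false) (hbb : ∀ n, s n = true → s (n + 1) = false)

include h0 hbb

lemma der_aperiodic (hap : ¬ EventuallyPeriodic s) : ¬ EventuallyPeriodic (der s) := by
  rintro ⟨p, hp, N, hper⟩
  apply hap
  refine ⟨bnd s (N + p) - bnd s N, ?_, bnd s N, ?_⟩
  · have := bnd_strictMono (s := s) (show N < N + p from by omega)
    omega
  · -- key: bnd (k + p) = bnd k + q for k ≥ N
    have hq : ∀ k, N ≤ k → bnd s (k + p) = bnd s k + (bnd s (N + p) - bnd s N) := by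
      intro k hk
      obtain ⟨j, rfl⟩ := Nat.le.dest hk
      induction j with
      | zero =>
          have := bnd_strictMono (s := s) (show N < N + p from by omega)
          rw [show N + 0 = N from rfl, show N + p = N + p from rfl]
          omega
      | succ j ih =>
          have hIH := ih (by omega)
          have e1 : bnd s (N + (j + 1) + p) = nxt s (bnd s (N + j + p)) := by
            rw [show N + (j + 1) + p = (N + j + p) + 1 from by omega]
            rfl
          have e2 : bnd s (N + (j + 1)) = nxt s (bnd s (N + j)) := rfl
          have hder : der s (N + j + p) = der s (N + j) := hper (N + j) (by omega)
          unfold der at hder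
          rw [e1, e2]
          unfold nxt
          rw [hder]
          split <;> omega
    intro n hn
    obtain ⟨k, hk1, hk2⟩ := bnd_between (s := s) h0 hbb n
    have hkN : N ≤ k := by
      by_contra hlt
      have : bnd s (k + 1) ≤ bnd s N := (bnd_strictMono (s := s)).le_iff_le.mpr (by omega)
      omega
    have hqk := hq k hkN
    have hqk1 := hq (k + 1) (by omega)
    rcases Nat.eq_or_lt_of_le hk1 with he | hlt
    · -- n is a boundary
      rw [show n + (bnd s (N + p) - bnd s N) = bnd s (k + p) from by omega]
      rw [← he]
      rw [bnd_letter h0 hbb, bnd_letter h0 hbb]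
    · -- n = bnd k + 1, with block of length 2
      have hb2 := bnd_le_two (s := s) k
      have hn' : n = bnd s k + 1 := by omega
      have e3 : s n = der s k := by rw [hn']; rfl
      have e4 : s (n + (bnd s (N + p) - bnd s N)) = der s (k + p) := by
        rw [hn', show bnd s k + 1 + (bnd s (N + p) - bnd s N) = bnd s (k + p) + 1 from by omega]
        rfl
      rw [e3, e4]
      exact hper k hkN

lemma der_balanced (hb : BalancedW s) : BalancedW (der s) := by
  intro u v hu hv hlen x
  -- reduce to letter true
  have key : ∀ u' v' : List Bool, FactorOf (der s) u' → FactorOf (der s) v' →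
      u'.length = v'.length → v'.count true + 2 ≤ u'.count true → False := by
    intro u' v' hu' hv' hlen' hcnt'
    obtain ⟨w, hbwb, hawa⟩ := awa_bwb u'.length u' v' rfl hu' hv' hlen' hcnt'
    -- map to s
    obtain ⟨π1, he1⟩ := hbwb
    obtain ⟨π2, he2⟩ := hawa
    have hf1 : FactorOf s (Ljoin (true :: (w ++ [true])) ++ [false]) := by
      have := der_factor h0 hbb π1 (true :: (w ++ [true])).length
      rwa [show slice (der s) π1 (true :: (w ++ [true])).length = true :: (w ++ [true])
        from he1.symm] at this
    have hf2 : FactorOf s (Ljoin (false :: (w ++ [false])) ++ [false]) := by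
      have := der_factor h0 hbb π2 (false :: (w ++ [false])).length
      rwa [show slice (der s) π2 (false :: (w ++ [false])).length = false :: (w ++ [false])
        from he2.symm] at this
    -- shapes
    have sh1 : Ljoin (true :: (w ++ [true])) ++ [false] =
        [false] ++ ((true :: (Ljoin w ++ [false, true])) ++ [false]) := by
      rw [Ljoin_cons, Ljoin_append]
      simp [Lmor, Ljoin]
    have sh2 : Ljoin (false :: (w ++ [false])) ++ [false] =
        (false :: (Ljoin w ++ [false, false])) := by
      rw [Ljoin_cons, Ljoin_append]
      simp [Lmor, Ljoin]
    -- heavy factor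
    have hheavy : FactorOf s (true :: (Ljoin w ++ [false, true])) := by
      refine factorOf_infix hf1 ?_
      rw [sh1]
      exact ⟨[false], [false], rfl⟩
    have hlight : FactorOf s (false :: (Ljoin w ++ [false, false])) := by
      rw [sh2] at hf2
      exact hf2
    have hbal := hb _ _ hheavy hlight (by simp) true
    simp [List.count_cons, List.count_append] at hbal
    rw [abs_le] at hbal
    omega
  -- now the general claim
  rcases Nat.lt_or_ge (u.count true + 1) (v.count true) with h | h
  · exact absurd (key v u hv hu hlen.symm (by omega)) (by simp)
  · rcases Nat.lt_or_ge (v.count true + 1) (u.count true) with h' | h'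
    · exact absurd (key u v hu hv hlen (by omega)) (by simp)
    · have e1 := count_false_add_count_true u
      have e2 := count_false_add_count_true v
      cases x
      · rw [abs_le]
        constructor <;> [skip; skip] <;> omega
      · rw [abs_le]
        constructor <;> omega

end Der2

end StAux

namespace StAux

/-- cut points of a factorization -/
def pp (U : ℕ → List Bool) (m : ℕ) : ℕ := (((List.range m).map U).flatten).length

@[simp] lemma pp_zero (U : ℕ → List Bool) : pp U 0 = 0 := by simp [pp]

lemma pp_succ (U : ℕ → List Bool) (m : ℕ) : pp U (m + 1) = pp U m + (U m).length := by
  simp [pp, List.range_succ]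

lemma between_of_strict (g : ℕ → ℕ) (hg0 : g 0 = 0) (hgs : ∀ k, g k < g (k + 1)) (m : ℕ) :
    ∃ k, g k ≤ m ∧ m < g (k + 1) := by
  induction m with
  | zero => exact ⟨0, by omega, by have := hgs 0; omega⟩
  | succ m ih =>
      obtain ⟨k, h1, h2⟩ := ih
      by_cases h : m + 1 < g (k + 1)
      · exact ⟨k, by omega, h⟩
      · exact ⟨k + 1, by omega, by have := hgs (k + 1); omega⟩

/-- count in a singleton -/
lemma count_one (z x : Bool) : List.count z [x] = if x = z then 1 else 0 := by
  cases z <;> cases x <;> simp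

lemma bool_eq_of_ne_ne {a b c : Bool} (h1 : a ≠ c) (h2 : b ≠ c) : a = b := by
  cases a <;> cases b <;> cases c <;> simp_all

section Fact

variable {s : ℕ → Bool} {U : ℕ → List Bool} {z : Bool}
  (hs : Sturmian s) (hfac : Factorization s U) (hpre : ∀ i, PrefixOf s (U i))
  (hrich : ∀ i, RichIn s (U i) z)

include hfac

lemma len_pos (i : ℕ) : 0 < (U i).length :=
  List.length_pos_iff.mpr (hfac.1 i)

lemma pp_strict (m : ℕ) : pp U m < pp U (m + 1) := by
  rw [pp_succ]
  have := len_pos hfac m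
  omega

lemma join_eq (m : ℕ) : ((List.range m).map U).flatten = slice s 0 (pp U m) := by
  have := hfac.2 m
  rw [prefixOf_iff] at this
  exact this

lemma blk (m : ℕ) : slice s (pp U m) ((U m).length) = U m := by
  have h1 := join_eq (s := s) hfac (m + 1)
  have hjs : ((List.range (m + 1)).map U).flatten = ((List.range m).map U).flatten ++ U m := by
    rw [List.range_succ]
    simp
  rw [hjs, join_eq (s := s) hfac m] at h1
  have h2 : slice s 0 (pp U (m + 1)) =
      slice s 0 (pp U m) ++ slice s (pp U m) ((U m).length) := by
    rw [pp_succ, slice_add]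
    simp
  rw [h2] at h1
  exact (List.append_cancel_left h1).symm

lemma factorOf_U (m : ℕ) : FactorOf s (U m) := by
  rw [← blk hfac m]
  exact factorOf_slice _ _ _

include hpre

lemma blk_pre (m : ℕ) : slice s (pp U m) ((U m).length) = slice s 0 ((U m).length) := by
  rw [blk hfac m]
  have := hpre m
  rw [prefixOf_iff] at this
  exact this

lemma cut_letter (m : ℕ) : s (pp U m) = s 0 := by
  have := slice_congr (blk_pre hfac hpre m) 0 (len_pos hfac m)
  simpa using this

include hrich

/-- windows never beat a rich block in `z`-count -/
lemma win_le (hbal : BalancedW s) (m j : ℕ) :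
    (slice s j ((U m).length)).count z ≤ (U m).count z :=
  tv hbal (factorOf_U hfac m) (hrich m) (factorOf_slice _ _ _) (by simp)

/-- dominance invariant in the case `z = s 0` -/
lemma dom (hbal : BalancedW s) (hz : z = s 0) :
    ∀ m k, (slice s (pp U m) k).count z ≤ (slice s 0 k).count z := by
  intro m
  induction m with
  | zero => intro k; simp
  | succ m ih =>
      intro k
      have hsplit : slice s (pp U m) ((U m).length + k) =
          U m ++ slice s (pp U (m + 1)) k := by
        rw [slice_add, blk hfac m, pp_succ]
      have hc1 := congrArg (List.count z) hsplit
      rw [List.count_append] at hc1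
      have hIH := ih ((U m).length + k)
      have hsplit2 : slice s 0 ((U m).length + k) =
          slice s 0 k ++ slice s k ((U m).length) := by
        rw [Nat.add_comm, slice_add]
        simp
      have hc2 := congrArg (List.count z) hsplit2
      rw [List.count_append] at hc2
      have htv := win_le hfac hpre hrich hbal m k
      omega

/-- KEY alignment lemma: the letter following each block-as-prefix is `s 0`. -/
lemma lemA (hbal : BalancedW s) : ∀ i, s ((U i).length) = s 0 := by
  intro i
  by_contra hne
  have hpre_i : U i = slice s 0 ((U i).length) := by
    have := hpre i
    rwa [prefixOf_iff] at this
  have hsplit : slice s 0 ((U i).length + 1) = U i ++ [s ((U i).length)] := by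
    rw [slice_succ, ← hpre_i]
    simp
  by_cases hz : z = s 0
  · -- dominance contradiction
    have hD := dom hfac hpre hrich hbal hz i ((U i).length + 1)
    have hsl : slice s (pp U i) ((U i).length + 1) = U i ++ [s (pp U (i + 1))] := by
      rw [slice_succ, blk hfac i, pp_succ]
    have hcl : s (pp U (i + 1)) = s 0 := cut_letter hfac hpre (i + 1)
    rw [hsl, hsplit, List.count_append, List.count_append, hcl, count_one, count_one,
      if_pos hz.symm, if_neg (fun h => hne (h.trans hz))] at hD
    omega
  · -- local contradiction: the window at position 1
    have hzn : s ((U i).length) = z := bool_eq_of_ne_ne hne hz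
    have hsplit2 : slice s 0 ((U i).length + 1) = [s 0] ++ slice s 1 ((U i).length) := by
      rw [Nat.add_comm, slice_add, slice_one]
    have hcomb := congrArg (List.count z) (hsplit2.symm.trans hsplit)
    rw [List.count_append, List.count_append, count_one, count_one,
      if_neg (fun h => hz h.symm), if_pos hzn] at hcomb
    have htv := win_le hfac hpre hrich hbal i 1
    omega

omit hrich in
/-- the first block contains a letter different from `s 0` -/
lemma lemW (hap : ¬ EventuallyPeriodic s) :
    ∃ r, r < (U 0).length ∧ s r ≠ s 0 := by
  have hex : ∃ r, s r ≠ s 0 := by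
    by_contra hc
    push_neg at hc
    exact hap ⟨1, by omega, 0, fun n _ => by rw [hc (n + 1), hc n]⟩
  classical
  let r := Nat.find hex
  have hr : s r ≠ s 0 := Nat.find_spec hex
  have hrmin : ∀ j, j < r → s j = s 0 := fun j hj => by
    have := Nat.find_min hex hj
    simpa using this
  obtain ⟨m, h1, h2⟩ := between_of_strict (pp U) (by simp) (pp_strict hfac) r
  have hblk := blk_pre hfac hpre m
  have hpt := slice_congr hblk (r - pp U m) (by rw [pp_succ] at h2; omega)
  rw [show pp U m + (r - pp U m) = r from by omega] at hpt
  simp only [Nat.zero_add] at hpt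
  by_cases hm : pp U m = 0
  · have hm0 : m = 0 := by
      by_contra hmne
      have : pp U 1 ≤ pp U m := by
        have : StrictMono (pp U) := strictMono_nat_of_lt_succ (pp_strict hfac)
        exact this.le_iff_le.mpr (by omega)
      have := pp_strict hfac 0
      simp at this
      omega
    subst hm0
    rw [pp_succ] at h2
    simp at h2 hm
    exact ⟨r, by omega, hr⟩
  · exfalso
    have hlt : r - pp U m < r := by omega
    have := hrmin _ hlt
    rw [hpt] at hr
    exact hr this

end Fact

end StAux

namespace StAux

lemma slice_split (s : ℕ → Bool) (i a b : ℕ) (h : a ≤ b) :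
    slice s i b = slice s i a ++ slice s (i + a) (b - a) := by
  conv_lhs => rw [show b = a + (b - a) from by omega]
  rw [slice_add]

section Transfer

variable {s : ℕ → Bool} (h0 : s 0 = false) (hbb : ∀ n, s n = true → s (n + 1) = false)

include h0 hbb

/-- richness transfers through desubstitution -/
lemma transfer (hbal : BalancedW s) (κ : ℕ) (hκ : 1 ≤ κ) (z : Bool)
    (hr : RichIn s (Ljoin (slice (der s) 0 κ)) z) :
    RichIn (der s) (slice (der s) 0 κ) z := by
  set t := der s with ht
  set V := slice t 0 κ with hV
  set n := bnd s κ with hn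
  have hUeq : Ljoin V = slice s 0 n := corr h0 hbb κ
  have hUlen : (Ljoin V).length = n := by rw [hUeq, length_slice]
  have hUfac : FactorOf s (Ljoin V) := by rw [hUeq]; exact factorOf_slice _ _ _
  have hlenV : (V : List Bool).length = κ := by rw [hV, length_slice]
  have hcV : (Ljoin V).count true = V.count true := count_true_Ljoin V
  have hnκ : n = κ + V.count true := by
    have := length_Ljoin V
    rw [hUlen, hlenV] at this
    exact this
  obtain ⟨hc1, j, hj⟩ := rich_witness hbal hUfac hr
  rw [hUlen] at hj
  have hcVle : V.count true ≤ κ := by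
    have := List.count_le_length (a := true) (l := V)
    omega
  cases z with
  | true =>
    -- c ≥ 1, witness slice s j n with count true = c - 1
    set c := V.count true with hc
    rw [hcV] at hj hc1
    have hn2 : 2 ≤ n := by omega
    -- left end alignment
    set j₁ := if s j = false then j else j + 1 with hj₁
    have hj₁f : s j₁ = false := by
      rw [hj₁]; split
      · assumption
      · rename_i h; simp at h; exact hbb j h
    have hj₁le : j ≤ j₁ ∧ j₁ ≤ j + 1 := by rw [hj₁]; split <;> omega
    -- right end alignment
    set j₂ := if s (j + n) = false then j + n else j + n - 1 with hj₂
    have hj₂f : s j₂ = false := by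
      rw [hj₂]; split
      · assumption
      · rename_i h
        simp at h
        cases hcase : s (j + n - 1)
        · rfl
        · exfalso
          have := hbb _ hcase
          rw [show j + n - 1 + 1 = j + n from by omega] at this
          rw [this] at h
          simp at h
    have hj₂le : j + n - 1 ≤ j₂ ∧ j₂ ≤ j + n := by rw [hj₂]; split <;> omega
    have hj₁₂ : j₁ ≤ j₂ := by omega
    -- count of the aligned middle window
    have hmid : (slice s j₁ (j₂ - j₁)).count true + 1 + (j₁ - j) = c := by
      have hsp1 : slice s j n = slice s j (j₁ - j) ++ slice s j₁ (n - (j₁ - j)) := by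
        have := slice_split s j (j₁ - j) n (by omega)
        rwa [show j + (j₁ - j) = j₁ from by omega] at this
      have hsp2 : slice s j₁ (n - (j₁ - j)) =
          slice s j₁ (j₂ - j₁) ++ slice s j₂ ((j + n) - j₂) := by
        have := slice_split s j₁ (j₂ - j₁) (n - (j₁ - j)) (by omega)
        rwa [show j₁ + (j₂ - j₁) = j₂ from by omega,
          show n - (j₁ - j) - (j₂ - j₁) = (j + n) - j₂ from by omega] at this
      have hcnt := congrArg (List.count true) hsp1
      rw [hsp2, List.count_append, List.count_append] at hcnt
      -- count of left bit
      have hleft : (slice s j (j₁ - j)).count true = j₁ - j := by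
        rcases Nat.eq_or_lt_of_le hj₁le.1 with h | h
        · rw [← h]; simp
        · have he : j₁ - j = 1 := by omega
          rw [he, slice_one, count_one]
          have : s j = true := by
            by_contra hc'
            simp at hc'
            rw [hj₁, if_pos hc'] at h
            omega
          rw [if_pos this]
      have hright : (slice s j₂ ((j + n) - j₂)).count true = 0 := by
        rcases Nat.eq_or_lt_of_le hj₂le.2 with h | h
        · rw [h]; simp
        · have he : (j + n) - j₂ = 1 := by omega
          rw [he, slice_one, count_one, if_neg]
          rw [hj₂f]
          simp
      rw [hleft, hright] at hcnt
      omega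
    -- get boundary indices
    obtain ⟨κ₁, hκ₁⟩ := bnd_surj h0 hbb j₁ hj₁f
    obtain ⟨κ₂, hκ₂⟩ := bnd_surj h0 hbb j₂ hj₂f
    have hκ₁₂ : κ₁ ≤ κ₂ := by
      by_contra hcon
      have := bnd_strictMono (s := s) (show κ₂ < κ₁ from by omega)
      omega
    set d := κ₂ - κ₁ with hd
    have hw : Ljoin (slice t κ₁ d) = slice s j₁ (j₂ - j₁) := by
      have := corr_win h0 hbb κ₁ d
      rwa [show κ₁ + d = κ₂ from by omega, hκ₁, hκ₂] at this
    have hwc : (slice t κ₁ d).count true = (slice s j₁ (j₂ - j₁)).count true := by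
      rw [← hw, count_true_Ljoin]
    have hwlen : j₂ - j₁ = d + (slice t κ₁ d).count true := by
      have := length_Ljoin (slice t κ₁ d)
      rw [hw, length_slice, length_slice] at this
      exact this
    -- d ≥ κ
    have hdκ : κ ≤ d := by omega
    refine ⟨slice t κ₁ κ, factorOf_slice _ _ _, by simp [hlenV], ?_⟩
    have hmono := count_slice_mono t κ₁ hdκ true
    omega
  | false =>
    -- witness slice s j n with count false = count false U - 1, i.e. count true = c + 1
    set c := V.count true with hc
    have hjt : (slice s j n).count true = c + 1 := by
      have e1 := count_false_add_count_true (slice s j n)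
      have e2 := count_false_add_count_true (Ljoin V)
      rw [length_slice] at e1
      rw [hUlen] at e2
      omega
    -- c < κ, else count true of a length-κ window would exceed κ
    -- (we derive the contradiction later; first build the window)
    set j₁ := if s j = false then j else j - 1 with hj₁
    have hjpos : s j = true → 1 ≤ j := by
      intro h
      by_contra hc'
      have : j = 0 := by omega
      rw [this, h0] at h
      simp at h
    have hj₁f : s j₁ = false := by
      rw [hj₁]; split
      · assumption
      · rename_i h
        simp at h
        cases hcase : s (j - 1)
        · rfl
        · exfalso
          have h1 := hjpos h
          have := hbb _ hcase
          rw [show j - 1 + 1 = j from by omega, h] at this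
          simp at this
    have hj₁le : j₁ ≤ j ∧ j ≤ j₁ + 1 := by
      rw [hj₁]; split
      · omega
      · rename_i h
        simp at h
        have := hjpos h
        omega
    set j₂ := if s (j + n) = false then j + n else j + n + 1 with hj₂
    have hj₂f : s j₂ = false := by
      rw [hj₂]; split
      · assumption
      · rename_i h
        simp at h
        exact hbb _ h
    have hj₂le : j + n ≤ j₂ ∧ j₂ ≤ j + n + 1 := by rw [hj₂]; split <;> omega
    have hj₁₂ : j₁ ≤ j₂ := by omega
    -- count of the aligned bigger window
    have hmid : (slice s j₁ (j₂ - j₁)).count true = c + 1 + (j₂ - (j + n)) := by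
      have hsp1 : slice s j₁ (j₂ - j₁) =
          slice s j₁ (j - j₁) ++ slice s j (j₂ - j) := by
        have := slice_split s j₁ (j - j₁) (j₂ - j₁) (by omega)
        rwa [show j₁ + (j - j₁) = j from by omega,
          show j₂ - j₁ - (j - j₁) = j₂ - j from by omega] at this
      have hsp2 : slice s j (j₂ - j) = slice s j n ++ slice s (j + n) (j₂ - (j + n)) := by
        have := slice_split s j n (j₂ - j) (by omega)
        rwa [show j₂ - j - n = j₂ - (j + n) from by omega] at this
      have hcnt := congrArg (List.count true) hsp1
      rw [hsp2, List.count_append, List.count_append] at hcnt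
      have hleft : (slice s j₁ (j - j₁)).count true = 0 := by
        rcases Nat.eq_or_lt_of_le hj₁le.1 with h | h
        · rw [h]; simp
        · have he : j - j₁ = 1 := by omega
          rw [he, slice_one, count_one, if_neg]
          rw [hj₁f]
          simp
      have hright : (slice s (j + n) (j₂ - (j + n))).count true = j₂ - (j + n) := by
        rcases Nat.eq_or_lt_of_le hj₂le.1 with h | h
        · rw [← h]; simp
        · have he : j₂ - (j + n) = 1 := by omega
          rw [he, slice_one, count_one]
          have : s (j + n) = true := by
            by_contra hc'
            simp at hc'
            rw [hj₂, if_pos hc'] at h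
            omega
          rw [if_pos this]
      rw [hleft, hright, hjt] at hcnt
      omega
    obtain ⟨κ₁, hκ₁⟩ := bnd_surj h0 hbb j₁ hj₁f
    obtain ⟨κ₂, hκ₂⟩ := bnd_surj h0 hbb j₂ hj₂f
    have hκ₁₂ : κ₁ ≤ κ₂ := by
      by_contra hcon
      have := bnd_strictMono (s := s) (show κ₂ < κ₁ from by omega)
      omega
    set d := κ₂ - κ₁ with hd
    have hw : Ljoin (slice t κ₁ d) = slice s j₁ (j₂ - j₁) := by
      have := corr_win h0 hbb κ₁ d
      rwa [show κ₁ + d = κ₂ from by omega, hκ₁, hκ₂] at this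
    have hwc : (slice t κ₁ d).count true = c + 1 + (j₂ - (j + n)) := by
      rw [← hmid, ← hw, count_true_Ljoin]
    have hwlen : j₂ - j₁ = d + (slice t κ₁ d).count true := by
      have := length_Ljoin (slice t κ₁ d)
      rw [hw, length_slice, length_slice] at this
      exact this
    -- d ≤ κ
    have hdκ : d ≤ κ := by omega
    have hbig : c + 1 ≤ (slice t κ₁ κ).count true := by
      have hmono := count_slice_mono t κ₁ hdκ true
      omega
    -- c < κ since counts are bounded by length
    have hcκ : c + 1 ≤ κ := by
      have := List.count_le_length (a := true) (l := slice t κ₁ κ)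
      rw [length_slice] at this
      omega
    refine ⟨slice t κ₁ κ, factorOf_slice _ _ _, by simp [hlenV], ?_⟩
    -- compare false-counts
    have e1 := count_false_add_count_true (slice t κ₁ κ)
    have e2 := count_false_add_count_true V
    rw [length_slice] at e1
    rw [hlenV] at e2
    omega

end Transfer

end StAux

namespace StAux

lemma bnd_add_le (s : ℕ → Bool) (a k : ℕ) : bnd s a + k ≤ bnd s (a + k) := by
  induction k with
  | zero => simp
  | succ k ih =>
      have := bnd_succ_ge (s := s) (a + k)
      rw [show a + (k + 1) = (a + k) + 1 from by omega]
      omega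

/-- the core construction: `s 0 = false` and no two consecutive `true`s -/
lemma core (s : ℕ → Bool) (hs : Sturmian s) (U : ℕ → List Bool)
    (hfac : Factorization s U) (hpre : ∀ i, PrefixOf s (U i))
    (z : Bool) (hrich : ∀ i, RichIn s (U i) z)
    (h0 : s 0 = false) (hbb : ∀ n, s n = true → s (n + 1) = false) :
    ∃ (t : ℕ → Bool) (V : ℕ → List Bool), Sturmian t ∧ Factorization t V ∧
      (∀ i, PrefixOf t (V i)) ∧ (∃ z' : Bool, ∀ i, RichIn t (V i) z') ∧
      (V 0).length < (U 0).length := by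
  set t := der s with ht
  have halign : ∀ i, s ((U i).length) = false := by
    intro i
    rw [lemA hfac hpre hrich hs.2 i, h0]
  have hκex : ∀ i, ∃ k, bnd s k = (U i).length :=
    fun i => bnd_surj h0 hbb _ (halign i)
  choose κ hκ using hκex
  set V : ℕ → List Bool := fun i => slice t 0 (κ i) with hVdef
  have hκpos : ∀ i, 1 ≤ κ i := by
    intro i
    by_contra hc
    have hκ0 : κ i = 0 := by omega
    have := hκ i
    rw [hκ0] at this
    have hb0 : bnd s 0 = 0 := rfl
    have := len_pos hfac i
    omega
  have hUimg : ∀ i, Ljoin (V i) = U i := by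
    intro i
    have h1 := corr h0 hbb (κ i)
    rw [hκ i] at h1
    have h2 := hpre i
    rw [prefixOf_iff] at h2
    rw [hVdef]
    rw [h1, ← h2]
  -- boundary indices of cut points
  have hKex : ∀ m, ∃ k, bnd s k = pp U m := by
    intro m
    apply bnd_surj h0 hbb
    rw [cut_letter hfac hpre m, h0]
  choose K hK using hKex
  have hK0 : K 0 = 0 := by
    have h1 := hK 0
    rw [pp_zero] at h1
    have h2 : bnd s 0 = 0 := rfl
    by_contra hc
    have := bnd_strictMono (s := s) (show 0 < K 0 from by omega)
    omega
  have hKmono : ∀ m, K m < K (m + 1) := by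
    intro m
    by_contra hc
    have h1 : bnd s (K (m + 1)) ≤ bnd s (K m) :=
      (bnd_strictMono (s := s)).le_iff_le.mpr (by omega)
    rw [hK, hK] at h1
    have := pp_strict hfac m
    omega
  have hVblk : ∀ m, slice t (K m) (K (m + 1) - K m) = V m := by
    intro m
    apply Ljoin_inj
    have h1 := corr_win h0 hbb (K m) (K (m + 1) - K m)
    rw [show K m + (K (m + 1) - K m) = K (m + 1) from by have := hKmono m; omega,
      hK, hK] at h1
    rw [h1, hUimg m]
    have h2 : pp U (m + 1) - pp U m = (U m).length := by rw [pp_succ]; omega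
    rw [h2]
    exact blk hfac m
  have hVjoin : ∀ m, ((List.range m).map V).flatten = slice t 0 (K m) := by
    intro m
    induction m with
    | zero => simp [hK0]
    | succ m ih =>
        have hjs : ((List.range (m + 1)).map V).flatten = ((List.range m).map V).flatten ++ V m := by
          rw [List.range_succ]
          simp
        rw [hjs, ih, ← hVblk m]
        rw [← slice_split0 t (K m) (K (m + 1)) (by have := hKmono m; omega)]
  refine ⟨t, V, ⟨der_aperiodic h0 hbb hs.1, der_balanced h0 hbb hs.2⟩, ⟨?_, ?_⟩, ?_, ⟨z, ?_⟩, ?_⟩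
  · -- blocks nonempty
    intro i
    rw [hVdef]
    intro hc
    have hlen := congrArg List.length hc
    rw [length_slice] at hlen
    simp at hlen
    have := hκpos i
    omega
  · -- factorization joins are prefixes
    intro m
    rw [hVjoin m, prefixOf_iff, length_slice]
  · -- blocks are prefixes
    intro i
    rw [hVdef]
    exact prefixOf_slice _ _
  · -- richness
    intro i
    have := transfer h0 hbb hs.2 (κ i) (hκpos i) z (by rw [hUimg i]; exact hrich i)
    exact this
  · -- strict length decrease
    rw [hVdef, length_slice]
    obtain ⟨r, hr1, hr2⟩ := lemW hfac hpre hs.1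
    rw [h0] at hr2
    have hrt : s r = true := by
      cases h : s r
      · rw [h] at hr2; simp at hr2
      · rfl
    by_contra hcon
    have hκ0ge : (U 0).length ≤ κ 0 := by omega
    have hble : κ 0 ≤ bnd s (κ 0) := le_bnd (κ 0)
    have hκeq : κ 0 = (U 0).length := by
      have := hκ 0
      omega
    have hbndeq : bnd s (κ 0) = κ 0 := by rw [hκ 0, hκeq]
    -- then all positions below κ 0 are boundaries
    have hall : ∀ p, p ≤ κ 0 → bnd s p = p := by
      intro p hp
      have h1 := bnd_add_le s p (κ 0 - p)
      rw [show p + (κ 0 - p) = κ 0 from by omega, hbndeq] at h1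
      have h2 := le_bnd (s := s) p
      omega
    have : s r = false := by
      rw [← hall r (by omega)]
      exact bnd_letter h0 hbb r
    rw [this] at hrt
    simp at hrt

end StAux

namespace StAux

lemma slice_shift (s : ℕ → Bool) (i n : ℕ) :
    slice (fun m => s (m + 1)) i n = slice s (i + 1) n := by
  apply slice_ext
  intro k hk
  show s (i + k + 1) = s (i + 1 + k)
  congr 1
  omega

lemma core2 (s : ℕ → Bool) (hs : Sturmian s) (U : ℕ → List Bool)
    (hfac : Factorization s U) (hpre : ∀ i, PrefixOf s (U i))
    (z : Bool) (hrich : ∀ i, RichIn s (U i) z)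
    (hbb : ∀ n, s n = true → s (n + 1) = false) :
    ∃ (t : ℕ → Bool) (V : ℕ → List Bool), Sturmian t ∧ Factorization t V ∧
      (∀ i, PrefixOf t (V i)) ∧ (∃ z' : Bool, ∀ i, RichIn t (V i) z') ∧
      (V 0).length < (U 0).length := by
  cases h0 : s 0 with
  | false => exact core s hs U hfac hpre z hrich h0 hbb
  | true =>
    have halign : ∀ i, s ((U i).length) = true := by
      intro i
      rw [lemA hfac hpre hrich hs.2 i, h0]
    set s' : ℕ → Bool := fun n => s (n + 1) with hs'def
    set U' : ℕ → List Bool := fun i => slice s' 0 ((U i).length) with hU'def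
    have hshift : ∀ j n : ℕ, slice s' j n = slice s (j + 1) n := by
      intro j n
      apply slice_ext
      intro k hk
      show s (j + k + 1) = s (j + 1 + k)
      congr 1
      omega
    have hfactor' : ∀ u : List Bool, FactorOf s' u → FactorOf s u := by
      intro u ⟨j, hj⟩
      have hueq : u = slice s' j u.length := hj
      rw [hueq, hshift]
      exact factorOf_slice _ _ _
    have hs's : Sturmian s' := by
      constructor
      · intro ⟨p, hp, N, hper⟩
        refine hs.1 ⟨p, hp, N + 1, fun n hn => ?_⟩
        have := hper (n - 1) (by omega)
        simp only [hs'def] at this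
        rw [show n - 1 + p + 1 = n + p from by omega, show n - 1 + 1 = n from by omega] at this
        exact this
      · intro u v hu hv hlen x
        exact hs.2 u v (hfactor' u hu) (hfactor' v hv) hlen x
    -- the shifted blocks
    have hU'blk : ∀ m, U' m = slice s' (pp U m) ((U m).length) := by
      intro m
      rw [hU'def]
      apply slice_ext
      intro k hk
      simp only [hs'def, Nat.zero_add]
      have hblk := blk_pre hfac hpre m
      rcases Nat.lt_or_ge (k + 1) ((U m).length) with h | h
      · have := slice_congr hblk (k + 1) h
        simp only [Nat.zero_add] at this
        rw [show pp U m + k + 1 = pp U m + (k + 1) from by omega]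
        exact this.symm
      · have hk1 : k + 1 = (U m).length := by omega
        rw [show pp U m + k + 1 = pp U (m + 1) from by rw [pp_succ]; omega, hk1,
          cut_letter hfac hpre (m + 1), halign m, h0]
    have hU'len : ∀ m, (U' m).length = (U m).length := by
      intro m
      rw [hU'def]
      simp
    have hfac' : Factorization s' U' := by
      constructor
      · intro i
        intro hc
        have hlc := congrArg List.length hc
        rw [hU'len i, List.length_nil] at hlc
        have := len_pos hfac i
        omega
      · intro m
        have hj : ((List.range m).map U').flatten = slice s' 0 (pp U m) := by
          induction m with
          | zero => simp
          | succ m ih =>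
              have hjs : ((List.range (m + 1)).map U').flatten =
                  ((List.range m).map U').flatten ++ U' m := by
                rw [List.range_succ]; simp
              have hsplit := slice_split0 s' (pp U m) (pp U m + (U m).length) (by omega)
              rw [show pp U m + (U m).length - pp U m = (U m).length from by omega] at hsplit
              rw [hjs, ih, hU'blk m, pp_succ, ← hsplit]
        rw [hj, prefixOf_iff, length_slice]
    have hpre' : ∀ i, PrefixOf s' (U' i) := by
      intro i
      rw [hU'def]
      exact prefixOf_slice _ _
    have hcnt' : ∀ i, (U' i).count z = (U i).count z := by
      intro i
      have hpre_i : U i = slice s 0 ((U i).length) := by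
        have := hpre i; rwa [prefixOf_iff] at this
      have hsp : slice s 0 ((U i).length + 1) = U i ++ [s ((U i).length)] := by
        rw [slice_succ, ← hpre_i]; simp
      have hsp2 : slice s 0 ((U i).length + 1) = [s 0] ++ slice s 1 ((U i).length) := by
        rw [Nat.add_comm, slice_add, slice_one]
      have hc := congrArg (List.count z) (hsp2.symm.trans hsp)
      rw [List.count_append, List.count_append, count_one, count_one, halign i, h0] at hc
      have hU'i : U' i = slice s 1 ((U i).length) := by
        show slice s' 0 ((U i).length) = _
        rw [hshift]
      rw [hU'i]
      omega
    have hrich' : ∀ i, RichIn s' (U' i) z := by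
      intro i
      obtain ⟨v, hv, hvlen, hvcnt⟩ := hrich i
      obtain ⟨j, hj⟩ := hv
      have hvsl : v = slice s j v.length := hj
      have hjpos : 1 ≤ j := by
        by_contra hc
        have hj0 : j = 0 := by omega
        rw [hj0, hvlen] at hvsl
        have hpre_i : U i = slice s 0 ((U i).length) := by
          have := hpre i; rwa [prefixOf_iff] at this
        rw [← hpre_i] at hvsl
        rw [hvsl] at hvcnt
        omega
      refine ⟨v, ⟨j - 1, ?_⟩, by rw [hvlen, hU'len i], by rw [hcnt' i]; exact hvcnt⟩
      have hveq : slice s' (j - 1) v.length = v := by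
        rw [hshift, show j - 1 + 1 = j from by omega]
        exact hvsl.symm
      exact hveq.symm
    have h0' : s' 0 = false := by
      simp only [hs'def]
      exact hbb 0 h0
    have hbb' : ∀ n, s' n = true → s' (n + 1) = false := fun n h => hbb (n + 1) h
    obtain ⟨t, V, h1, h2, h3, h4, h5⟩ := core s' hs's U' hfac' hpre' z hrich' h0' hbb'
    exact ⟨t, V, h1, h2, h3, h4, by rwa [hU'len 0] at h5⟩

end StAux

namespace StAux

lemma count_map_not (u : List Bool) (x : Bool) : (u.map not).count x = u.count (!x) := by
  induction u with
  | nil => simp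
  | cons a l ih =>
      cases a <;> cases x <;> simp [List.count_cons, ih]

lemma slice_not (s : ℕ → Bool) (i n : ℕ) :
    (slice s i n).map not = slice (fun m => !(s m)) i n := by
  simp [slice, List.map_map]
lemma factorOf_not {s : ℕ → Bool} {u : List Bool} (h : FactorOf s u) :
    FactorOf (fun n => !(s n)) (u.map not) := by
  obtain ⟨i, hi⟩ := h
  have hu : u = slice s i u.length := hi
  refine ⟨i, ?_⟩
  have : u.map not = slice (fun n => !(s n)) i (u.map not).length := by
    rw [List.length_map, hu, length_slice, slice_not]
  exact this

lemma factorOf_not' {s : ℕ → Bool} {u : List Bool}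
    (h : FactorOf (fun n => !(s n)) u) : FactorOf s (u.map not) := by
  have h2 := factorOf_not h
  have he : (fun n => !(!(s n))) = s := by
    funext n
    simp
  rwa [he] at h2

theorem stmt_15' (s : ℕ → Bool) (hs : Sturmian s) (U : ℕ → List Bool)
    (hfac : Factorization s U) (hpre : ∀ i, PrefixOf s (U i))
    (z : Bool) (hrich : ∀ i, RichIn s (U i) z) :
    ∃ (t : ℕ → Bool) (V : ℕ → List Bool), Sturmian t ∧ Factorization t V ∧
      (∀ i, PrefixOf t (V i)) ∧ (∃ z' : Bool, ∀ i, RichIn t (V i) z') ∧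
      (V 0).length < (U 0).length := by
  by_cases hTT : FactorOf s [true, true]
  · -- `aa` is not a factor; swap letters
    have hAA : ∀ n, s n = false → s (n + 1) = true := by
      intro n h1
      by_contra h2
      simp only [Bool.not_eq_true] at h2
      have hFF : FactorOf s [false, false] := by
        have : [false, false] = slice s n 2 := by
          rw [show (2:ℕ) = 1 + 1 from rfl, slice_add, slice_one, slice_one, h1, h2]
          rfl
        rw [this]
        exact factorOf_slice _ _ _
      have := hs.2 [true, true] [false, false] hTT hFF rfl true
      simp at this
    set s' : ℕ → Bool := fun n => !(s n) with hs'def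
    set U' : ℕ → List Bool := fun i => (U i).map not with hU'def
    have hs's : Sturmian s' := by
      constructor
      · intro ⟨p, hp, N, hper⟩
        refine hs.1 ⟨p, hp, N, fun n hn => ?_⟩
        have := hper n hn
        simp only [hs'def] at this
        cases h1 : s (n + p) <;> cases h2 : s n <;> rw [h1, h2] at this <;> simp at this <;> rfl
      · intro u v hu hv hlen x
        have hu' := factorOf_not' hu
        have hv' := factorOf_not' hv
        have := hs.2 _ _ hu' hv' (by simp [hlen]) (!x)
        rwa [count_map_not, count_map_not, Bool.not_not] at this
    have hfac' : Factorization s' U' := by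
      constructor
      · intro i
        simp only [hU'def]
        intro hc
        exact hfac.1 i (List.map_eq_nil_iff.mp hc)
      · intro m
        have hjoin : ((List.range m).map U').flatten = (((List.range m).map U).flatten).map not := by
          induction m with
          | zero => simp
          | succ m ih =>
              rw [List.range_succ]
              simp only [List.map_append, List.flatten_append, ih]
              simp [hU'def]
        have hP := hfac.2 m
        rw [prefixOf_iff] at hP
        rw [prefixOf_iff, hjoin]
        rw [List.length_map]
        conv_lhs => rw [hP]
        rw [slice_not]
      
    have hpre' : ∀ i, PrefixOf s' (U' i) := by
      intro i
      have hP := hpre i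
      rw [prefixOf_iff] at hP
      rw [prefixOf_iff]
      show (U i).map not = _
      rw [List.length_map]
      conv_lhs => rw [hP]
      rw [slice_not]
    have hrich' : ∀ i, RichIn s' (U' i) (!z) := by
      intro i
      obtain ⟨v, hv, hvlen, hvcnt⟩ := hrich i
      refine ⟨v.map not, factorOf_not hv, by simp [hvlen, hU'def], ?_⟩
      rw [count_map_not]
      show _ < ((U i).map not).count (!z)
      rw [count_map_not, Bool.not_not]
      exact hvcnt
    have hbb' : ∀ n, s' n = true → s' (n + 1) = false := by
      intro n h
      simp only [hs'def] at h ⊢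
      simp only [Bool.not_eq_true'] at h
      rw [hAA n h]
      rfl
    obtain ⟨t, V, h1, h2, h3, h4, h5⟩ := core2 s' hs's U' hfac' hpre' (!z) hrich' hbb'
    refine ⟨t, V, h1, h2, h3, h4, ?_⟩
    rwa [show (U' 0).length = (U 0).length from by simp [hU'def]] at h5
  · -- no `bb`
    have hbb : ∀ n, s n = true → s (n + 1) = false := by
      intro n h1
      by_contra h2
      simp only [Bool.not_eq_false] at h2
      apply hTT
      have : [true, true] = slice s n 2 := by
        rw [show (2:ℕ) = 1 + 1 from rfl, slice_add, slice_one, slice_one, h1, h2]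
        rfl
      rw [this]
      exact factorOf_slice _ _ _
    exact core2 s hs U hfac hpre z hrich hbb

end StAux


/-- Descent step: from a same-richness prefix-factorization of a Sturmian word one obtains
another one with strictly shorter first block. -/
theorem stmt_15 (s : ℕ → Bool) (hs : Sturmian s) (U : ℕ → List Bool)
    (hfac : Factorization s U) (hpre : ∀ i, PrefixOf s (U i))
    (z : Bool) (hrich : ∀ i, RichIn s (U i) z) :
    ∃ (t : ℕ → Bool) (V : ℕ → List Bool), Sturmian t ∧ Factorization t V ∧
      (∀ i, PrefixOf t (V i)) ∧ (∃ z' : Bool, ∀ i, RichIn t (V i) z') ∧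
      (V 0).length < (U 0).length :=
  StAux.stmt_15' s hs U hfac hpre z hrich
end
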